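/- arXiv:2603.24833 — 3 statements merged into one kernel-verified Lean document; each statement's English description precedes it below -/
import Mathlib

section
/- Let N, T be positive integers, S ∈ ℝ^{N×T}, and λ > 0 with λ > 2‖S‖ (operator norm). Then every minimizer L̂ over A ∈ ℝ^{N×T} of the objective ‖S − A‖_F² + λ‖A‖_* equals the zero matrix. (This is the exact-zero-recovery part of the paper's Lemma on nuclear-norm penalization: if the signal L = 0, the penalized estimator is exactly 0.) -/
open Matrix MeasureTheory ProbabilityTheory

noncomputable def frob {m n : Type*} [Fintype m] [Fintype n] (A : Matrix m n ℝ) : ℝ :=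
  Real.sqrt (∑ i, ∑ j, (A i j) ^ 2)

noncomputable def opNorm {m n : Type*} [Fintype m] [Fintype n] [DecidableEq n]
    (A : Matrix m n ℝ) : ℝ :=
  ‖LinearMap.toContinuousLinearMap (Matrix.toEuclideanLin A)‖

noncomputable def nucNorm {m n : Type*} [Fintype m] [Fintype n] [DecidableEq n]
    (A : Matrix m n ℝ) : ℝ :=
  ∑ j, Real.sqrt ((Matrix.isHermitian_conjTranspose_mul_self A).eigenvalues j)

lemma frob_sq {m n : Type*} [Fintype m] [Fintype n] (A : Matrix m n ℝ) :
    frob A ^ 2 = ∑ i, ∑ j, (A i j) ^ 2 := by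
  apply Real.sq_sqrt
  exact Finset.sum_nonneg fun i _ => Finset.sum_nonneg fun j _ => sq_nonneg _

lemma nucNorm_nonneg {m n : Type*} [Fintype m] [Fintype n] [DecidableEq n]
    (A : Matrix m n ℝ) : 0 ≤ nucNorm A :=
  Finset.sum_nonneg fun j _ => Real.sqrt_nonneg _

lemma eigenvalues_zero_mat {m n : Type*} [Fintype m] [Fintype n] [DecidableEq n] (j : n) :
    (Matrix.isHermitian_conjTranspose_mul_self (0 : Matrix m n ℝ)).eigenvalues j = 0 := by
  have h := (Matrix.isHermitian_conjTranspose_mul_self (0 : Matrix m n ℝ)).mulVec_eigenvectorBasis j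
  have hb : ‖(Matrix.isHermitian_conjTranspose_mul_self (0 : Matrix m n ℝ)).eigenvectorBasis j‖ = 1 :=
    (Matrix.isHermitian_conjTranspose_mul_self (0 : Matrix m n ℝ)).eigenvectorBasis.orthonormal.1 j
  have h0 : (Matrix.isHermitian_conjTranspose_mul_self (0 : Matrix m n ℝ)).eigenvalues j •
      (WithLp.equiv 2 (n → ℝ))
        ((Matrix.isHermitian_conjTranspose_mul_self (0 : Matrix m n ℝ)).eigenvectorBasis j) = 0 := by
    rw [WithLp.equiv_apply, ← h]; simp
  rcases smul_eq_zero.mp h0 with h1 | h1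
  · exact h1
  · exfalso
    have hz : (Matrix.isHermitian_conjTranspose_mul_self (0 : Matrix m n ℝ)).eigenvectorBasis j
        = (0 : EuclideanSpace ℝ n) := by
      apply (WithLp.equiv 2 (n → ℝ)).injective
      simpa using h1
    rw [hz] at hb
    simp at hb

lemma nucNorm_zero {m n : Type*} [Fintype m] [Fintype n] [DecidableEq n] :
    nucNorm (0 : Matrix m n ℝ) = 0 := by
  unfold nucNorm
  apply Finset.sum_eq_zero
  intro j _
  rw [eigenvalues_zero_mat, Real.sqrt_zero]

lemma trace_le_op_mul_nuc {m n : Type*} [Fintype m] [Fintype n] [DecidableEq m] [DecidableEq n]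
    (S L : Matrix m n ℝ) :
    ∑ i, ∑ j, S i j * L i j ≤ opNorm S * nucNorm L := by
  classical
  set hH := Matrix.isHermitian_conjTranspose_mul_self L with hHdef
  set V : Matrix n n ℝ := (hH.eigenvectorUnitary : Matrix n n ℝ) with hV
  have h1 : ∑ i, ∑ j, S i j * L i j = Matrix.trace (Sᵀ * L) := by
    rw [Matrix.trace]
    simp only [Matrix.diag, Matrix.mul_apply, Matrix.transpose_apply]
    rw [Finset.sum_comm]
  have hVV : V * Vᵀ = 1 := by
    have h := (Matrix.mem_unitaryGroup_iff).mp hH.eigenvectorUnitary.2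
    simpa [hV, Matrix.star_eq_conjTranspose, Matrix.conjTranspose_eq_transpose_of_trivial] using h
  have h2 : Matrix.trace (Sᵀ * L) = Matrix.trace ((S * V)ᵀ * (L * V)) := by
    symm
    rw [Matrix.transpose_mul]
    rw [show Vᵀ * Sᵀ * (L * V) = Vᵀ * (Sᵀ * L) * V by simp only [Matrix.mul_assoc]]
    rw [Matrix.trace_mul_cycle, hVV, Matrix.one_mul]
  have h3 : Matrix.trace ((S * V)ᵀ * (L * V)) =
      ∑ j, (inner ℝ (Matrix.toEuclideanLin S (hH.eigenvectorBasis j))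
        (Matrix.toEuclideanLin L (hH.eigenvectorBasis j)) : ℝ) := by
    rw [Matrix.trace]
    apply Finset.sum_congr rfl
    intro j _
    simp only [Matrix.diag, Matrix.mul_apply, Matrix.transpose_apply, PiLp.inner_apply,
      RCLike.inner_apply, starRingEnd_apply, star_trivial, Matrix.toEuclideanLin_apply,
      PiLp.toLp_apply, Matrix.mulVec, dotProduct, WithLp.equiv_apply, hV,
      Matrix.IsHermitian.eigenvectorUnitary_apply]
    exact Finset.sum_congr rfl fun _ _ => mul_comm _ _
  have h4 : ∀ j, (inner ℝ (Matrix.toEuclideanLin S (hH.eigenvectorBasis j))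
      (Matrix.toEuclideanLin L (hH.eigenvectorBasis j)) : ℝ)
      ≤ opNorm S * Real.sqrt (hH.eigenvalues j) := by
    intro j
    have hnv : ‖hH.eigenvectorBasis j‖ = 1 := hH.eigenvectorBasis.orthonormal.1 j
    have ha : ‖Matrix.toEuclideanLin S (hH.eigenvectorBasis j)‖ ≤ opNorm S := by
      have := (LinearMap.toContinuousLinearMap (Matrix.toEuclideanLin S)).le_opNorm
        (hH.eigenvectorBasis j)
      simpa [opNorm, hnv] using this
    set u : n → ℝ := (WithLp.equiv 2 (n → ℝ)) ((hH.eigenvectorBasis j : EuclideanSpace ℝ n))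
      with hu
    have hmv : (Lᴴ * L) *ᵥ u = hH.eigenvalues j • u := hH.mulVec_eigenvectorBasis j
    have huu : u ⬝ᵥ u = 1 := by
      have h5 := real_inner_self_eq_norm_sq (hH.eigenvectorBasis j : EuclideanSpace ℝ n)
      rw [hnv] at h5
      rw [hu, dotProduct]
      simp only [PiLp.inner_apply, RCLike.inner_apply, starRingEnd_apply, star_trivial,
        one_pow] at h5
      simpa only [WithLp.equiv_apply] using h5
    have hdot : (L *ᵥ u) ⬝ᵥ (L *ᵥ u) = hH.eigenvalues j := by
      have e1 : u ⬝ᵥ ((Lᴴ * L) *ᵥ u) = (L *ᵥ u) ⬝ᵥ (L *ᵥ u) := by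
        rw [← Matrix.mulVec_mulVec, Matrix.dotProduct_mulVec u Lᴴ,
          Matrix.conjTranspose_eq_transpose_of_trivial, Matrix.vecMul_transpose]
      rw [← e1, hmv, dotProduct_smul, huu, smul_eq_mul, mul_one]
    have hb : ‖Matrix.toEuclideanLin L (hH.eigenvectorBasis j)‖
        = Real.sqrt (hH.eigenvalues j) := by
      have hb2 : ‖Matrix.toEuclideanLin L (hH.eigenvectorBasis j)‖ ^ 2 = hH.eigenvalues j := by
        rw [← real_inner_self_eq_norm_sq]
        rw [← hdot]
        simp only [PiLp.inner_apply, RCLike.inner_apply, starRingEnd_apply, star_trivial,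
          Matrix.toEuclideanLin_apply, PiLp.toLp_apply, dotProduct, hu, WithLp.equiv_apply]
      rw [← Real.sqrt_sq (norm_nonneg _), hb2]
    calc (inner ℝ (Matrix.toEuclideanLin S (hH.eigenvectorBasis j))
        (Matrix.toEuclideanLin L (hH.eigenvectorBasis j)) : ℝ)
        ≤ ‖Matrix.toEuclideanLin S (hH.eigenvectorBasis j)‖
          * ‖Matrix.toEuclideanLin L (hH.eigenvectorBasis j)‖ := real_inner_le_norm _ _
      _ ≤ opNorm S * Real.sqrt (hH.eigenvalues j) := by
          rw [hb]
          exact mul_le_mul_of_nonneg_right ha (Real.sqrt_nonneg _)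
  rw [h1, h2, h3, nucNorm, Finset.mul_sum]
  exact Finset.sum_le_sum fun j _ => h4 j

/-- If the data is pure noise `S` and the penalty level satisfies
`λ > 2‖S‖` (operator norm), then every minimizer of the nuclear-norm penalized
objective `‖S − A‖_F² + λ‖A‖_*` is the zero matrix. -/
theorem nuclear_norm_denoising_zero_recovery
    (N T : ℕ) (hN : 0 < N) (hT : 0 < T)
    (S : Matrix (Fin N) (Fin T) ℝ) (lam : ℝ) (hlam0 : 0 < lam)
    (hlam : 2 * opNorm S < lam)
    (Lhat : Matrix (Fin N) (Fin T) ℝ)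
    (hmin : ∀ A : Matrix (Fin N) (Fin T) ℝ,
      frob (S - Lhat) ^ 2 + lam * nucNorm Lhat ≤ frob (S - A) ^ 2 + lam * nucNorm A) :
    Lhat = 0 := by
  have key := hmin 0
  rw [sub_zero, nucNorm_zero, mul_zero, add_zero] at key
  have hexp : frob (S - Lhat) ^ 2 =
      frob S ^ 2 - 2 * (∑ i, ∑ j, S i j * Lhat i j) + frob Lhat ^ 2 := by
    rw [frob_sq, frob_sq, frob_sq]
    have hpt : ∀ i j, ((S - Lhat) i j) ^ 2
        = S i j ^ 2 - 2 * (S i j * Lhat i j) + Lhat i j ^ 2 := by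
      intro i j; simp only [Matrix.sub_apply]; ring
    simp only [hpt, Finset.sum_add_distrib, Finset.sum_sub_distrib, ← Finset.mul_sum]
  rw [hexp] at key
  have hip := trace_le_op_mul_nuc S Lhat
  have hfs : frob Lhat ^ 2 ≤ (2 * opNorm S - lam) * nucNorm Lhat := by nlinarith
  have hneg : (2 * opNorm S - lam) * nucNorm Lhat ≤ 0 :=
    mul_nonpos_of_nonpos_of_nonneg (by linarith) (nucNorm_nonneg _)
  have hf0 : ∑ i, ∑ j, (Lhat i j) ^ 2 ≤ 0 := by rw [← frob_sq]; linarith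
  ext i j
  have hall := (Finset.sum_eq_zero_iff_of_nonneg
    (fun i _ => Finset.sum_nonneg fun j _ => sq_nonneg (Lhat i j))).mp
    (le_antisymm hf0 (Finset.sum_nonneg fun i _ => Finset.sum_nonneg fun j _ => sq_nonneg _))
  have := (Finset.sum_eq_zero_iff_of_nonneg (fun j _ => sq_nonneg (Lhat i j))).mp
    (hall i (Finset.mem_univ i)) j (Finset.mem_univ j)
  simpa using pow_eq_zero_iff (n := 2) (by norm_num) |>.mp this
end

section
/- Let Z = L + S with Z, L, S ∈ ℝ^{N×T}, rank(L) = K, let λ > 0 satisfy λ ≥ (2/(1−c))‖S‖ for some constant c ∈ (0,1), and let L̂ be any minimizer over A ∈ ℝ^{N×T} of ‖Z − A‖_F² + λ‖A‖_*. Then Δ = L̂ − L satisfies ‖Δ‖_F² + cλ‖Δ‖_* ≤ 2λ‖L‖_*; in particular ‖Δ‖_* ≤ (2/c)‖L‖_* and ‖L̂ − L‖_F ≤ (2/c)√K · ‖L‖_F. -/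
open Matrix MeasureTheory ProbabilityTheory

namespace NucAux
variable {N T : ℕ} (A B : Matrix (Fin N) (Fin T) ℝ)

noncomputable def ev (A : Matrix (Fin N) (Fin T) ℝ) : Fin T → ℝ :=
  (Matrix.isHermitian_conjTranspose_mul_self A).eigenvalues

noncomputable def evec (A : Matrix (Fin N) (Fin T) ℝ) :
    OrthonormalBasis (Fin T) ℝ (EuclideanSpace ℝ (Fin T)) :=
  (Matrix.isHermitian_conjTranspose_mul_self A).eigenvectorBasis

noncomputable def vv (A : Matrix (Fin N) (Fin T) ℝ) (k : Fin T) : Fin T → ℝ :=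
  fun j => evec A k j

lemma evec_rows (a b : Fin T) :
    ∑ k, vv A k a * vv A k b = if a = b then 1 else 0 := by
  have h := Unitary.coe_mul_star_self
    ((Matrix.isHermitian_conjTranspose_mul_self A).eigenvectorUnitary)
  have h2 : ((((Matrix.isHermitian_conjTranspose_mul_self A).eigenvectorUnitary : Matrix (Fin T) (Fin T) ℝ)) * star (((Matrix.isHermitian_conjTranspose_mul_self A).eigenvectorUnitary : Matrix (Fin T) (Fin T) ℝ))) a b = (1 : Matrix (Fin T) (Fin T) ℝ) a b := by
    rw [← Unitary.coe_star, h]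
  simpa [Matrix.mul_apply, Matrix.one_apply, Matrix.star_apply, evec, vv, WithLp.equiv_apply] using h2

lemma nucNorm_eq (A : Matrix (Fin N) (Fin T) ℝ) :
    nucNorm A = ∑ j, Real.sqrt (ev A j) := rfl

lemma dot_Av (A : Matrix (Fin N) (Fin T) ℝ) (x y : Fin T → ℝ) :
    (A *ᵥ x) ⬝ᵥ (A *ᵥ y) = x ⬝ᵥ ((Aᴴ * A) *ᵥ y) := by
  rw [← Matrix.mulVec_mulVec, Matrix.dotProduct_mulVec x,
    show Aᴴ = Aᵀ from rfl, Matrix.vecMul_transpose]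

lemma mulVec_evec (A : Matrix (Fin N) (Fin T) ℝ) (j : Fin T) :
    (Aᴴ * A) *ᵥ vv A j = ev A j • vv A j :=
  (Matrix.isHermitian_conjTranspose_mul_self A).mulVec_eigenvectorBasis j

lemma inner_eq_dot {n : ℕ} (x y : EuclideanSpace ℝ (Fin n)) :
    (inner ℝ x y : ℝ) = (x : Fin n → ℝ) ⬝ᵥ (y : Fin n → ℝ) := by
  simp [PiLp.inner_apply, RCLike.inner_apply, starRingEnd_apply, dotProduct, mul_comm]

lemma evec_dot (A : Matrix (Fin N) (Fin T) ℝ) (j k : Fin T) :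
    vv A j ⬝ᵥ vv A k = if j = k then 1 else 0 := by
  rw [← inner_eq_dot]
  exact orthonormal_iff_ite.mp (evec A).orthonormal j k

lemma dot_Av_evec (A : Matrix (Fin N) (Fin T) ℝ) (j k : Fin T) :
    (A *ᵥ vv A j) ⬝ᵥ (A *ᵥ vv A k) = if j = k then ev A k else 0 := by
  rw [dot_Av, mulVec_evec, dotProduct_smul, smul_eq_mul, evec_dot]
  simp [mul_ite]

lemma trace_formula (M : Matrix (Fin T) (Fin T) ℝ) :
    ∑ k, vv A k ⬝ᵥ (M *ᵥ vv A k) = M.trace := by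
  have key : ∀ a : Fin T, ∑ k, vv A k a * ∑ b, M a b * vv A k b = M a a := by
    intro a
    have : ∀ k, vv A k a * ∑ b, M a b * vv A k b
        = ∑ b, M a b * (vv A k a * vv A k b) := by
      intro k; rw [Finset.mul_sum]; exact Finset.sum_congr rfl fun b _ => by ring
    simp only [this]
    rw [Finset.sum_comm]
    have : ∀ b, ∑ k, M a b * (vv A k a * vv A k b)
        = M a b * (if a = b then 1 else 0) := by
      intro b; rw [← Finset.mul_sum, evec_rows A a b]
    simp only [this, mul_ite, mul_one, mul_zero, Finset.sum_ite_eq, Finset.mem_univ, if_true]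
  calc ∑ k, vv A k ⬝ᵥ (M *ᵥ vv A k)
      = ∑ a, ∑ k, vv A k a * ∑ b, M a b * vv A k b := by
        rw [Finset.sum_comm]
        refine Finset.sum_congr rfl fun k _ => ?_
        simp [dotProduct, Matrix.mulVec, WithLp.equiv_apply]
    _ = M.trace := by
        rw [Matrix.trace]
        exact Finset.sum_congr rfl fun a _ => key a

lemma entry_sum_eq (X Y : Matrix (Fin N) (Fin T) ℝ) :
    ∑ i, ∑ j, X i j * Y i j = (Xᴴ * Y).trace := by
  rw [Matrix.trace, Finset.sum_comm]
  simp [Matrix.diag, Matrix.mul_apply, Matrix.conjTranspose_apply]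

lemma dot_mixed (X Y : Matrix (Fin N) (Fin T) ℝ) (x y : Fin T → ℝ) :
    (X *ᵥ x) ⬝ᵥ (Y *ᵥ y) = x ⬝ᵥ ((Xᴴ * Y) *ᵥ y) := by
  rw [← Matrix.mulVec_mulVec, Matrix.dotProduct_mulVec x,
    show Xᴴ = Xᵀ from rfl, Matrix.vecMul_transpose]

lemma entry_sum_basis (X Y : Matrix (Fin N) (Fin T) ℝ) :
    ∑ i, ∑ j, X i j * Y i j = ∑ k, (X *ᵥ vv A k) ⬝ᵥ (Y *ᵥ vv A k) := by
  rw [entry_sum_eq]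
  simp only [dot_mixed]
  rw [trace_formula]

lemma dot_le {n : ℕ} (x y : Fin n → ℝ) :
    x ⬝ᵥ y ≤ Real.sqrt (∑ i, x i ^ 2) * Real.sqrt (∑ i, y i ^ 2) := by
  have h := real_inner_le_norm ((WithLp.equiv 2 (Fin n → ℝ)).symm x)
    ((WithLp.equiv 2 (Fin n → ℝ)).symm y)
  simpa [PiLp.inner_apply, RCLike.inner_apply, starRingEnd_apply, dotProduct,
    WithLp.equiv_symm_apply, PiLp.toLp_apply, EuclideanSpace.norm_eq, Real.norm_eq_abs, sq_abs, mul_comm] using h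

lemma sum_sq_eq_dot {n : ℕ} (x : Fin n → ℝ) : ∑ i, x i ^ 2 = x ⬝ᵥ x := by
  simp [dotProduct, pow_two]

lemma norm_Av (k : Fin T) :
    Real.sqrt (∑ i, (A *ᵥ vv A k) i ^ 2) = Real.sqrt (ev A k) := by
  rw [sum_sq_eq_dot, dot_Av_evec]
  simp

lemma norm_evec (k : Fin T) : Real.sqrt (∑ j, (vv A k j) ^ 2) = 1 := by
  rw [sum_sq_eq_dot, evec_dot]
  simp

lemma opNorm_mulVec (x : Fin T → ℝ) :
    Real.sqrt (∑ i, (B *ᵥ x) i ^ 2) ≤ opNorm B * Real.sqrt (∑ j, x j ^ 2) := by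
  have h := (LinearMap.toContinuousLinearMap (Matrix.toEuclideanLin B)).le_opNorm
    ((WithLp.equiv 2 (Fin T → ℝ)).symm x)
  simpa [LinearMap.coe_toContinuousLinearMap', Matrix.toEuclideanLin_apply,
    EuclideanSpace.norm_eq, Real.norm_eq_abs, sq_abs, opNorm] using h

lemma opNorm_nonneg' : 0 ≤ opNorm B := norm_nonneg _

lemma nucNorm_nonneg' : 0 ≤ nucNorm B :=
  Finset.sum_nonneg fun j _ => Real.sqrt_nonneg _

lemma dual_le : ∑ i, ∑ j, B i j * A i j ≤ opNorm B * nucNorm A := by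
  rw [entry_sum_basis A B A, nucNorm_eq, Finset.mul_sum]
  refine Finset.sum_le_sum fun k _ => ?_
  calc (B *ᵥ vv A k) ⬝ᵥ (A *ᵥ vv A k)
      ≤ Real.sqrt (∑ i, (B *ᵥ vv A k) i ^ 2) *
        Real.sqrt (∑ i, (A *ᵥ vv A k) i ^ 2) := dot_le _ _
    _ ≤ (opNorm B * Real.sqrt (∑ j, (vv A k j) ^ 2)) * Real.sqrt (ev A k) := by
        rw [norm_Av]
        exact mul_le_mul_of_nonneg_right (opNorm_mulVec B _) (Real.sqrt_nonneg _)
    _ = opNorm B * Real.sqrt (ev A k) := by rw [norm_evec]; ring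

lemma ev_nonneg (k : Fin T) : 0 ≤ ev A k :=
  Matrix.eigenvalues_conjTranspose_mul_self_nonneg A k

lemma sum_rot {α β γ : Type*} [Fintype α] [Fintype β] [Fintype γ] (f : α → β → γ → ℝ) :
    ∑ i, ∑ j, ∑ k, f i j k = ∑ k, ∑ i, ∑ j, f i j k := by
  have h1 : ∀ i, ∑ j, ∑ k, f i j k = ∑ k, ∑ j, f i j k := fun i => Finset.sum_comm
  simp_rw [h1]
  exact Finset.sum_comm

lemma vv_sq_ne_zero (k : Fin T) (h : ev A k ≠ 0) :
    (Real.sqrt (ev A k))⁻¹ ^ 2 * ev A k = 1 := by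
  have h0 : 0 < ev A k := lt_of_le_of_ne (ev_nonneg A k) (Ne.symm h)
  have hs : 0 < Real.sqrt (ev A k) := Real.sqrt_pos.mpr h0
  rw [← Real.sq_sqrt (le_of_lt h0)]
  field_simp
  rw [Real.sqrt_sq hs.le]

/-- the dual certificate matrix -/
noncomputable def dualizer (A : Matrix (Fin N) (Fin T) ℝ) : Matrix (Fin N) (Fin T) ℝ :=
  Matrix.of fun i j => ∑ k, (Real.sqrt (ev A k))⁻¹ * (A *ᵥ vv A k) i * vv A k j

lemma dualizer_entry_sum :
    ∑ i, ∑ j, (dualizer A) i j * A i j = nucNorm A := by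
  rw [nucNorm_eq]
  calc ∑ i, ∑ j, (dualizer A) i j * A i j
      = ∑ i, ∑ j, ∑ k,
          (Real.sqrt (ev A k))⁻¹ * (A *ᵥ vv A k) i * vv A k j * A i j := by
        refine Finset.sum_congr rfl fun i _ => Finset.sum_congr rfl fun j _ => ?_
        simp only [dualizer, Matrix.of_apply, Finset.sum_mul]
    _ = ∑ k, ∑ i, ∑ j,
          (Real.sqrt (ev A k))⁻¹ * (A *ᵥ vv A k) i * vv A k j * A i j := sum_rot _
    _ = ∑ k, (Real.sqrt (ev A k))⁻¹ * ((A *ᵥ vv A k) ⬝ᵥ (A *ᵥ vv A k)) := by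
        refine Finset.sum_congr rfl fun k _ => ?_
        have h0 : (A *ᵥ vv A k) ⬝ᵥ (A *ᵥ vv A k)
            = ∑ i, (A *ᵥ vv A k) i * ∑ j, A i j * vv A k j := rfl
        rw [h0, Finset.mul_sum]
        refine Finset.sum_congr rfl fun i _ => ?_
        rw [Finset.mul_sum, Finset.mul_sum]
        refine Finset.sum_congr rfl fun j _ => by ring
    _ = ∑ k, Real.sqrt (ev A k) := by
        refine Finset.sum_congr rfl fun k _ => ?_
        rw [dot_Av_evec A k k, if_pos rfl, inv_mul_eq_div, Real.div_sqrt]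

lemma parseval (x : Fin T → ℝ) : ∑ k, (vv A k ⬝ᵥ x) ^ 2 = ∑ j, x j ^ 2 := by
  have h1 : ‖(evec A).repr ((WithLp.equiv 2 (Fin T → ℝ)).symm x)‖
      = ‖(WithLp.equiv 2 (Fin T → ℝ)).symm x‖ := LinearIsometryEquiv.norm_map _ _
  have h2 : ∀ k, (evec A).repr ((WithLp.equiv 2 (Fin T → ℝ)).symm x) k = vv A k ⬝ᵥ x := by
    intro k
    rw [OrthonormalBasis.repr_apply_apply, inner_eq_dot]
    rfl
  rw [EuclideanSpace.norm_eq, EuclideanSpace.norm_eq] at h1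
  have h4 := (Real.sqrt_inj (Finset.sum_nonneg fun _ _ => sq_nonneg _)
    (Finset.sum_nonneg fun _ _ => sq_nonneg _)).mp h1
  simp only [WithLp.equiv_symm_apply] at h2
  simp only [Real.norm_eq_abs, sq_abs, h2, WithLp.equiv_symm_apply, PiLp.toLp_apply] at h4
  exact h4

lemma dualizer_mulVec_sq (y : Fin T → ℝ) :
    ∑ i, ((dualizer A) *ᵥ y) i ^ 2 ≤ ∑ j, y j ^ 2 := by
  set d : Fin T → ℝ := fun k => (Real.sqrt (ev A k))⁻¹ * (vv A k ⬝ᵥ y) with hd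
  have expand : ∀ i, ((dualizer A) *ᵥ y) i = ∑ k, d k * (A *ᵥ vv A k) i := by
    intro i
    have h0 : ((dualizer A) *ᵥ y) i
        = ∑ j, (∑ k, (Real.sqrt (ev A k))⁻¹ * (A *ᵥ vv A k) i * vv A k j) * y j := rfl
    rw [h0]
    simp only [Finset.sum_mul]
    rw [Finset.sum_comm]
    refine Finset.sum_congr rfl fun k _ => ?_
    have h1 : vv A k ⬝ᵥ y = ∑ j, vv A k j * y j := rfl
    simp only [hd, h1, Finset.mul_sum, Finset.sum_mul]
    refine Finset.sum_congr rfl fun j _ => by ring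
  have key : ∑ i, ((dualizer A) *ᵥ y) i ^ 2 = ∑ k, d k ^ 2 * ev A k := by
    calc ∑ i, ((dualizer A) *ᵥ y) i ^ 2
        = ∑ i, ∑ k, ∑ l, (d k * (A *ᵥ vv A k) i) * (d l * (A *ᵥ vv A l) i) := by
          refine Finset.sum_congr rfl fun i _ => ?_
          rw [expand i, pow_two, Finset.sum_mul_sum]
      _ = ∑ l, ∑ i, ∑ k, (d k * (A *ᵥ vv A k) i) * (d l * (A *ᵥ vv A l) i) := sum_rot _
      _ = ∑ k, ∑ l, ∑ i, (d k * (A *ᵥ vv A k) i) * (d l * (A *ᵥ vv A l) i) := sum_rot _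
      _ = ∑ k, ∑ l, (d k * d l) * ((A *ᵥ vv A k) ⬝ᵥ (A *ᵥ vv A l)) := by
          refine Finset.sum_congr rfl fun k _ => Finset.sum_congr rfl fun l _ => ?_
          have h3 : (A *ᵥ vv A k) ⬝ᵥ (A *ᵥ vv A l)
              = ∑ i, (A *ᵥ vv A k) i * (A *ᵥ vv A l) i := rfl
          rw [h3, Finset.mul_sum]
          refine Finset.sum_congr rfl fun i _ => by ring
      _ = ∑ k, d k ^ 2 * ev A k := by
          refine Finset.sum_congr rfl fun k _ => ?_
          simp only [dot_Av_evec, mul_ite, mul_zero]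
          rw [Finset.sum_ite_eq]
          simp [pow_two, mul_comm, mul_assoc, mul_left_comm]
  rw [key, ← parseval A y]
  refine Finset.sum_le_sum fun k _ => ?_
  by_cases h : ev A k = 0
  · rw [h, mul_zero]
    exact sq_nonneg _
  · have h2 := vv_sq_ne_zero A k h
    calc d k ^ 2 * ev A k
        = (vv A k ⬝ᵥ y) ^ 2 * ((Real.sqrt (ev A k))⁻¹ ^ 2 * ev A k) := by
          simp only [hd]; ring
      _ = (vv A k ⬝ᵥ y) ^ 2 := by rw [h2, mul_one]
      _ ≤ (vv A k ⬝ᵥ y) ^ 2 := le_rfl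

lemma dualizer_opNorm_le : opNorm (dualizer A) ≤ 1 := by
  refine ContinuousLinearMap.opNorm_le_bound _ zero_le_one fun x => ?_
  rw [one_mul]
  have h2 := Real.sqrt_le_sqrt (dualizer_mulVec_sq A ((WithLp.equiv 2 (Fin T → ℝ)) x))
  simpa [LinearMap.coe_toContinuousLinearMap', Matrix.toEuclideanLin_apply,
    EuclideanSpace.norm_eq, Real.norm_eq_abs, sq_abs, WithLp.equiv_apply] using h2

lemma nucNorm_triangle (X Y : Matrix (Fin N) (Fin T) ℝ) :
    nucNorm (X + Y) ≤ nucNorm X + nucNorm Y := by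
  rw [← dualizer_entry_sum (X + Y)]
  have split : ∑ i, ∑ j, (dualizer (X + Y)) i j * (X + Y) i j
      = (∑ i, ∑ j, (dualizer (X + Y)) i j * X i j)
        + ∑ i, ∑ j, (dualizer (X + Y)) i j * Y i j := by
    rw [← Finset.sum_add_distrib]
    refine Finset.sum_congr rfl fun i _ => ?_
    rw [← Finset.sum_add_distrib]
    refine Finset.sum_congr rfl fun j _ => ?_
    simp [Matrix.add_apply, mul_add]
  rw [split]
  have h1 : ∑ i, ∑ j, (dualizer (X + Y)) i j * X i j ≤ nucNorm X :=
    le_trans (dual_le X (dualizer (X + Y)))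
      (by
        have := mul_le_mul_of_nonneg_right (dualizer_opNorm_le (X + Y)) (nucNorm_nonneg' X)
        simpa using this)
  have h2 : ∑ i, ∑ j, (dualizer (X + Y)) i j * Y i j ≤ nucNorm Y :=
    le_trans (dual_le Y (dualizer (X + Y)))
      (by
        have := mul_le_mul_of_nonneg_right (dualizer_opNorm_le (X + Y)) (nucNorm_nonneg' Y)
        simpa using this)
  linarith

lemma eig_congr {n : Type*} [Fintype n] [DecidableEq n] {M₁ M₂ : Matrix n n ℝ}
    (h1 : M₁.IsHermitian) (h2 : M₂.IsHermitian) (h : M₁ = M₂) :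
    h1.eigenvalues = h2.eigenvalues := by subst h; rfl

lemma nucNorm_congr (X Y : Matrix (Fin N) (Fin T) ℝ) (h : Xᴴ * X = Yᴴ * Y) :
    nucNorm X = nucNorm Y := by
  unfold nucNorm
  rw [eig_congr (Matrix.isHermitian_conjTranspose_mul_self X)
    (Matrix.isHermitian_conjTranspose_mul_self Y) h]

lemma nucNorm_neg (X : Matrix (Fin N) (Fin T) ℝ) : nucNorm (-X) = nucNorm X :=
  nucNorm_congr _ _ (by simp)

lemma frob_sq (X : Matrix (Fin N) (Fin T) ℝ) : frob X ^ 2 = ∑ i, ∑ j, X i j ^ 2 :=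
  Real.sq_sqrt (Finset.sum_nonneg fun _ _ => Finset.sum_nonneg fun _ _ => sq_nonneg _)

lemma frob_nonneg (X : Matrix (Fin N) (Fin T) ℝ) : 0 ≤ frob X := Real.sqrt_nonneg _

lemma sum_ev_eq (A : Matrix (Fin N) (Fin T) ℝ) : ∑ k, ev A k = ∑ i, ∑ j, A i j ^ 2 := by
  have h := (Matrix.isHermitian_conjTranspose_mul_self A).spectral_theorem
  have ht : (Aᴴ * A).trace = ∑ j, ev A j := by
    conv_lhs => rw [h]
    rw [Unitary.conjStarAlgAut_apply, Matrix.trace_mul_cycle, Unitary.coe_star_mul_self, Matrix.one_mul,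
      Matrix.trace_diagonal]
    simp [ev]
  rw [← ht, Matrix.trace, Finset.sum_comm]
  simp [Matrix.diag, Matrix.mul_apply, Matrix.conjTranspose_apply, pow_two]

lemma frob_eq_sqrt_sum_ev (A : Matrix (Fin N) (Fin T) ℝ) :
    frob A = Real.sqrt (∑ k, ev A k) := by
  rw [frob, sum_ev_eq]

lemma frob_le_nucNorm (A : Matrix (Fin N) (Fin T) ℝ) : frob A ≤ nucNorm A := by
  rw [frob_eq_sqrt_sum_ev, nucNorm_eq]
  have h1 : ∑ k, ev A k ≤ (∑ k, Real.sqrt (ev A k)) ^ 2 := by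
    have e : ∀ k : Fin T, ev A k = Real.sqrt (ev A k) ^ 2 :=
      fun k => (Real.sq_sqrt (ev_nonneg A k)).symm
    calc ∑ k, ev A k = ∑ k, Real.sqrt (ev A k) ^ 2 := Finset.sum_congr rfl fun k _ => e k
      _ ≤ ∑ k, Real.sqrt (ev A k) * ∑ l, Real.sqrt (ev A l) := by
          refine Finset.sum_le_sum fun k _ => ?_
          rw [pow_two]
          exact mul_le_mul_of_nonneg_left
            (Finset.single_le_sum (fun l _ => Real.sqrt_nonneg _) (Finset.mem_univ k))
            (Real.sqrt_nonneg _)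
      _ = (∑ k, Real.sqrt (ev A k)) ^ 2 := by rw [← Finset.sum_mul, pow_two]
  calc Real.sqrt (∑ k, ev A k) ≤ Real.sqrt ((∑ k, Real.sqrt (ev A k)) ^ 2) :=
        Real.sqrt_le_sqrt h1
    _ = ∑ k, Real.sqrt (ev A k) :=
        Real.sqrt_sq (Finset.sum_nonneg fun _ _ => Real.sqrt_nonneg _)

lemma nucNorm_le_sqrt_rank_mul_frob (A : Matrix (Fin N) (Fin T) ℝ) :
    nucNorm A ≤ Real.sqrt (A.rank) * frob A := by
  classical
  set s : Finset (Fin T) := Finset.univ.filter (fun k => ev A k ≠ 0) with hs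
  have hcard : (s.card : ℝ) = (A.rank : ℝ) := by
    have h1 : A.rank = Fintype.card {i // ev A i ≠ 0} := by
      rw [show A.rank = (Aᴴ * A).rank from (Matrix.rank_transpose_mul_self A).symm]
      exact (Matrix.isHermitian_conjTranspose_mul_self A).rank_eq_card_non_zero_eigs
    rw [h1, Fintype.card_subtype]
  have hsum : nucNorm A = ∑ k ∈ s, Real.sqrt (ev A k) := by
    rw [nucNorm_eq]
    refine (Finset.sum_subset (Finset.subset_univ s) fun k _ hk => ?_).symm
    simp only [hs, Finset.mem_filter, Finset.mem_univ, true_and, not_not] at hk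
    rw [hk, Real.sqrt_zero]
  have hsq : (∑ k ∈ s, Real.sqrt (ev A k)) ^ 2 ≤ (A.rank : ℝ) * ∑ k, ev A k := by
    calc (∑ k ∈ s, Real.sqrt (ev A k)) ^ 2
        ≤ s.card * ∑ k ∈ s, Real.sqrt (ev A k) ^ 2 := sq_sum_le_card_mul_sum_sq
      _ = (A.rank : ℝ) * ∑ k ∈ s, ev A k := by
          rw [hcard]
          congr 1
          exact Finset.sum_congr rfl fun k _ => Real.sq_sqrt (ev_nonneg A k)
      _ ≤ (A.rank : ℝ) * ∑ k, ev A k := by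
          refine mul_le_mul_of_nonneg_left ?_ (Nat.cast_nonneg _)
          exact Finset.sum_le_sum_of_subset_of_nonneg (Finset.subset_univ s)
            fun k _ _ => ev_nonneg A k
  rw [hsum, frob_eq_sqrt_sum_ev]
  have h2 : 0 ≤ ∑ k ∈ s, Real.sqrt (ev A k) :=
    Finset.sum_nonneg fun _ _ => Real.sqrt_nonneg _
  calc ∑ k ∈ s, Real.sqrt (ev A k)
      = Real.sqrt ((∑ k ∈ s, Real.sqrt (ev A k)) ^ 2) := (Real.sqrt_sq h2).symm
    _ ≤ Real.sqrt ((A.rank : ℝ) * ∑ k, ev A k) := Real.sqrt_le_sqrt hsq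
    _ = Real.sqrt (A.rank) * Real.sqrt (∑ k, ev A k) :=
        Real.sqrt_mul (Nat.cast_nonneg _) _

lemma frob_sub_sq (X Y : Matrix (Fin N) (Fin T) ℝ) :
    frob (X - Y) ^ 2 = frob X ^ 2 - 2 * (∑ i, ∑ j, X i j * Y i j) + frob Y ^ 2 := by
  simp only [frob_sq]
  have h : ∀ i j, (X - Y) i j ^ 2 = X i j ^ 2 - 2 * (X i j * Y i j) + Y i j ^ 2 := by
    intro i j
    simp [Matrix.sub_apply]
    ring
  simp only [h]
  rw [Finset.mul_sum, ← Finset.sum_sub_distrib, ← Finset.sum_add_distrib]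
  refine Finset.sum_congr rfl fun i _ => ?_
  rw [Finset.mul_sum, ← Finset.sum_sub_distrib, ← Finset.sum_add_distrib]

end NucAux

open NucAux in
/-- If `Z = L + S`, `rank L = K`, `c ∈ (0,1)`, and `λ ≥ (2/(1−c))‖S‖`,
then any minimizer `L̂` of `‖Z − A‖_F² + λ‖A‖_*` satisfies
`‖Δ‖_F² + cλ‖Δ‖_* ≤ 2λ‖L‖_*`, `‖Δ‖_* ≤ (2/c)‖L‖_*`, and
`‖L̂ − L‖_F ≤ (2/c)√K‖L‖_F` where `Δ = L̂ − L`. -/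
theorem nuclear_norm_error_bound_via_nuclear_norm_of_L
    (N T K : ℕ) (L S : Matrix (Fin N) (Fin T) ℝ) (hK : L.rank = K)
    (c : ℝ) (hc : c ∈ Set.Ioo (0 : ℝ) 1)
    (lam : ℝ) (hlam0 : 0 < lam) (hlam : 2 / (1 - c) * opNorm S ≤ lam)
    (Lhat : Matrix (Fin N) (Fin T) ℝ)
    (hmin : ∀ A : Matrix (Fin N) (Fin T) ℝ,
      frob (L + S - Lhat) ^ 2 + lam * nucNorm Lhat ≤
        frob (L + S - A) ^ 2 + lam * nucNorm A) :
    frob (Lhat - L) ^ 2 + c * lam * nucNorm (Lhat - L) ≤ 2 * lam * nucNorm L ∧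
    nucNorm (Lhat - L) ≤ 2 / c * nucNorm L ∧
    frob (Lhat - L) ≤ 2 / c * Real.sqrt K * frob L := by
  obtain ⟨hc0, hc1⟩ := hc
  have h1c : (0:ℝ) < 1 - c := by linarith
  have hmin' := hmin L
  rw [show L + S - L = S by abel, show L + S - Lhat = S - (Lhat - L) by abel] at hmin'
  have expand := frob_sub_sq S (Lhat - L)
  have hdual := dual_le (Lhat - L) S
  have hop : 2 * opNorm S ≤ (1 - c) * lam := by
    have h2 := mul_le_mul_of_nonneg_left hlam (le_of_lt h1c)
    rw [show (1 - c) * (2 / (1 - c) * opNorm S) = 2 * opNorm S by field_simp] at h2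
    linarith
  have htri : nucNorm (Lhat - L) ≤ nucNorm Lhat + nucNorm L := by
    have h3 := nucNorm_triangle Lhat (-L)
    rw [nucNorm_neg] at h3
    simpa [sub_eq_add_neg] using h3
  have hnn := nucNorm_nonneg' (Lhat - L)
  have hnnL := nucNorm_nonneg' L
  have hnnLh := nucNorm_nonneg' Lhat
  have hsq := sq_nonneg (frob (Lhat - L))
  have hkey := mul_le_mul_of_nonneg_right hop hnn
  have hlamtri := mul_le_mul_of_nonneg_left htri (le_of_lt hlam0)
  have main1 : frob (Lhat - L) ^ 2 + c * lam * nucNorm (Lhat - L)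
      ≤ 2 * lam * nucNorm L := by nlinarith [hmin', expand, hdual, hkey, hlamtri]
  have h5' : (c * nucNorm (Lhat - L)) * lam ≤ (2 * nucNorm L) * lam := by
    nlinarith [main1, hsq]
  have h6 := le_of_mul_le_mul_right h5' hlam0
  have main2 : nucNorm (Lhat - L) ≤ 2 / c * nucNorm L := by
    rw [div_mul_eq_mul_div, le_div_iff₀ hc0]
    linarith
  refine ⟨main1, main2, ?_⟩
  have hnucL : nucNorm L ≤ Real.sqrt K * frob L := by
    have := nucNorm_le_sqrt_rank_mul_frob L
    rwa [hK] at this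
  calc frob (Lhat - L) ≤ nucNorm (Lhat - L) := frob_le_nucNorm _
    _ ≤ 2 / c * nucNorm L := main2
    _ ≤ 2 / c * (Real.sqrt K * frob L) :=
        mul_le_mul_of_nonneg_left hnucL (by positivity)
    _ = 2 / c * Real.sqrt K * frob L := (mul_assoc _ _ _).symm
end

section
/- There exists a universal constant C > 0 with the following property (the deterministic content of the paper's Corollary on singular-vector convergence, via Wedin's sinΘ theorem). Let M ∈ ℝ^{N×T} have rank K with smallest nonzero singular value λ_K > 0, let U ∈ ℝ^{N×K} and V ∈ ℝ^{T×K} be matrices whose columns are orthonormal left and right singular vectors of M associated with its K nonzero singular values, let M̂ ∈ ℝ^{N×T} be any matrix, and let Û ∈ ℝ^{N×K}, V̂ ∈ ℝ^{T×K} be matrices whose columns are orthonormal left and right singular vectors of M̂ associated with its K largest singular values. If ‖M̂ − M‖ ≤ λ_K/2, then there exists a K×K orthogonal matrix R such that max{ ‖Û − U R‖_F, ‖V̂ − V R‖_F } ≤ C · ‖M̂ − M‖_F / λ_K. -/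
open Matrix MeasureTheory ProbabilityTheory

set_option linter.unusedSectionVars false
set_option maxHeartbeats 2000000

namespace Wedin
section Helpers
variable {m n p q : Type*} [Fintype m] [Fintype n] [Fintype p] [Fintype q]

variable {m n p q : Type*} [Fintype m] [Fintype n] [Fintype p] [Fintype q]

/-- squared Frobenius norm -/
def fsq (A : Matrix m n ℝ) : ℝ := ∑ i, ∑ j, (A i j) ^ 2

lemma frob_eq (A : Matrix m n ℝ) : frob A = Real.sqrt (fsq A) := rfl

lemma fsq_nonneg (A : Matrix m n ℝ) : 0 ≤ fsq A := by
  apply Finset.sum_nonneg; intro i _; apply Finset.sum_nonneg; intro j _; positivity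

lemma fsq_transpose (A : Matrix m n ℝ) : fsq Aᵀ = fsq A := by
  unfold fsq; rw [Finset.sum_comm]; rfl

lemma trace_transpose_mul (A B : Matrix m n ℝ) :
    (Aᵀ * B).trace = ∑ i, ∑ j, A i j * B i j := by
  unfold Matrix.trace Matrix.diag
  simp only [Matrix.mul_apply, Matrix.transpose_apply]
  rw [Finset.sum_comm]

lemma fsq_eq_trace (A : Matrix m n ℝ) : fsq A = (Aᵀ * A).trace := by
  rw [trace_transpose_mul]; unfold fsq; simp only [pow_two]

lemma trace_le_frob_mul_frob (A B : Matrix m n ℝ) :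
    (Aᵀ * B).trace ≤ frob A * frob B := by
  rw [trace_transpose_mul, frob_eq, frob_eq]
  have h := Finset.sum_mul_sq_le_sq_mul_sq Finset.univ
    (fun ij : m × n => A ij.1 ij.2) (fun ij : m × n => B ij.1 ij.2)
  have h1 : (∑ i, ∑ j, A i j * B i j) = ∑ ij : m × n, A ij.1 ij.2 * B ij.1 ij.2 := by
    rw [Fintype.sum_prod_type]
  have h2 : fsq A = ∑ ij : m × n, A ij.1 ij.2 ^ 2 := by
    unfold fsq; rw [Fintype.sum_prod_type]
  have h3 : fsq B = ∑ ij : m × n, B ij.1 ij.2 ^ 2 := by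
    unfold fsq; rw [Fintype.sum_prod_type]
  rw [h1, h2, h3, ← Real.sqrt_mul (by positivity)]
  calc (∑ ij : m × n, A ij.1 ij.2 * B ij.1 ij.2)
      ≤ |∑ ij : m × n, A ij.1 ij.2 * B ij.1 ij.2| := le_abs_self _
    _ = Real.sqrt ((∑ ij : m × n, A ij.1 ij.2 * B ij.1 ij.2) ^ 2) := (Real.sqrt_sq_eq_abs _).symm
    _ ≤ _ := Real.sqrt_le_sqrt h

lemma frob_nonneg (A : Matrix m n ℝ) : 0 ≤ frob A := Real.sqrt_nonneg _

lemma fsq_mul_orth (A : Matrix m n ℝ) (V : Matrix n p ℝ) [DecidableEq p]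
    (hV : Vᵀ * V = 1) : fsq (A * V) ≤ fsq A := by
  set G := Aᵀ * A with hG
  set P := V * Vᵀ with hPdef
  have hPP : P * P = P := by
    rw [hPdef, Matrix.mul_assoc, ← Matrix.mul_assoc Vᵀ V Vᵀ, hV, Matrix.one_mul]
  have hfAV : fsq (A * V) = (G * P).trace := by
    rw [fsq_eq_trace]
    simp only [Matrix.transpose_mul]
    rw [Matrix.mul_assoc Vᵀ Aᵀ (A * V), ← Matrix.mul_assoc Aᵀ A V, ← hG,
      Matrix.trace_mul_comm, Matrix.mul_assoc]
  have hexp : (A - A * P)ᵀ * (A - A * P) = G - G * P - P * G + P * (G * P) := by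
    simp only [Matrix.transpose_sub, Matrix.transpose_mul, Matrix.transpose_transpose,
      hPdef, Matrix.sub_mul, Matrix.mul_sub, hG]
    simp only [Matrix.mul_assoc]
    abel
  have hkey : fsq A - fsq (A * V) = fsq (A - A * P) := by
    rw [hfAV, fsq_eq_trace (A - A * P), hexp, fsq_eq_trace A, ← hG]
    rw [Matrix.trace_add, Matrix.trace_sub, Matrix.trace_sub]
    have c1 : (P * G).trace = (G * P).trace := Matrix.trace_mul_comm P G
    have c2 : (P * (G * P)).trace = (G * P).trace := by
      rw [Matrix.trace_mul_comm, Matrix.mul_assoc, hPP]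
    rw [c1, c2]; ring
  nlinarith [fsq_nonneg (A - A * P)]


/-- trace of Gᵀ D G for diagonal D -/
lemma trace_transpose_diag_mul (D : Matrix p p ℝ) [DecidableEq p] (hD : D.IsDiag)
    (G : Matrix p n ℝ) :
    (Gᵀ * (D * G)).trace = ∑ i, D i i * ∑ j, (G i j) ^ 2 := by
  rw [← hD.diagonal_diag]
  unfold Matrix.trace Matrix.diag
  simp only [Matrix.mul_apply, Matrix.transpose_apply, Matrix.diagonal_mul, Matrix.diag_apply]
  rw [Finset.sum_comm]
  congr 1; funext i
  rw [Finset.mul_sum]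
  congr 1; funext j
  rw [Finset.sum_eq_single i (fun b _ hb => by simp [Matrix.diagonal_apply_ne' _ hb]) (by simp)]
  simp [Matrix.diagonal_apply_eq]; ring

def nsq (x : n → ℝ) : ℝ := ∑ i, x i ^ 2

lemma nsq_nonneg (x : n → ℝ) : 0 ≤ nsq x := by
  apply Finset.sum_nonneg; intro i _; positivity

noncomputable def enorm (x : n → ℝ) : ℝ := ‖(WithLp.equiv 2 (n → ℝ)).symm x‖

lemma enorm_eq (x : n → ℝ) : enorm x = Real.sqrt (nsq x) := by
  unfold enorm nsq
  rw [EuclideanSpace.norm_eq]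
  congr 1
  apply Finset.sum_congr rfl
  intro i _
  rw [Real.norm_eq_abs, sq_abs]; rfl

lemma nsq_eq_enorm_sq (x : n → ℝ) : nsq x = enorm x ^ 2 := by
  rw [enorm_eq, Real.sq_sqrt (nsq_nonneg x)]

lemma enorm_nonneg (x : n → ℝ) : 0 ≤ enorm x := norm_nonneg _

lemma enorm_sub_le (x y : n → ℝ) : enorm (x - y) ≤ enorm x + enorm y := by
  unfold enorm
  rw [show (WithLp.equiv 2 (n → ℝ)).symm (x - y)
      = (WithLp.equiv 2 (n → ℝ)).symm x - (WithLp.equiv 2 (n → ℝ)).symm y from rfl]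
  exact norm_sub_le _ _

lemma enorm_mulVec_le (A : Matrix m n ℝ) [DecidableEq n] (x : n → ℝ) :
    enorm (A *ᵥ x) ≤ opNorm A * enorm x := by
  unfold enorm opNorm
  have := (LinearMap.toContinuousLinearMap (Matrix.toEuclideanLin A)).le_opNorm
    ((WithLp.equiv 2 (n → ℝ)).symm x)
  simpa [Matrix.toEuclideanLin_apply] using this

lemma opNorm_nonneg (A : Matrix m n ℝ) [DecidableEq n] : 0 ≤ opNorm A := norm_nonneg _

lemma dot_mulVec_left (A : Matrix m n ℝ) (x : n → ℝ) (y : m → ℝ) :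
    (A *ᵥ x) ⬝ᵥ y = x ⬝ᵥ (Aᵀ *ᵥ y) := by
  rw [dotProduct_comm, dotProduct_mulVec, ← Matrix.mulVec_transpose,
    dotProduct_comm]

lemma nsq_eq_dot (x : n → ℝ) : nsq x = x ⬝ᵥ x := by
  unfold nsq dotProduct; congr 1; ext i; ring

lemma nsq_mulVec_orth (A : Matrix m n ℝ) [DecidableEq n] (hA : Aᵀ * A = 1) (x : n → ℝ) :
    nsq (A *ᵥ x) = nsq x := by
  rw [nsq_eq_dot, nsq_eq_dot, dot_mulVec_left, Matrix.mulVec_mulVec, hA, Matrix.one_mulVec]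


lemma mulVec_isDiag (D : Matrix p p ℝ) [DecidableEq p] (hD : D.IsDiag) (a : p → ℝ) (i : p) :
    (D *ᵥ a) i = D i i * a i := by
  conv_lhs => rw [← hD.diagonal_diag]
  rw [Matrix.mulVec_diagonal]
  rfl

lemma nsq_add (x y : n → ℝ) : nsq (x + y) = nsq x + 2 * (x ⬝ᵥ y) + nsq y := by
  unfold nsq dotProduct
  rw [Finset.mul_sum, ← Finset.sum_add_distrib, ← Finset.sum_add_distrib]
  apply Finset.sum_congr rfl
  intro i _
  simp only [Pi.add_apply]
  ring

lemma trace_eq_sum (A : Matrix p p ℝ) : A.trace = ∑ i, A i i := rfl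

lemma le_of_sq_le_sq {a b : ℝ} (ha : 0 ≤ a) (hb : 0 ≤ b) (h : a ^ 2 ≤ b ^ 2) : a ≤ b := by
  nlinarith

lemma frob_le_frob {A : Matrix m n ℝ} {B : Matrix p q ℝ} (h : fsq A ≤ fsq B) :
    frob A ≤ frob B := by
  rw [frob_eq, frob_eq]
  exact Real.sqrt_le_sqrt h

lemma nsq_pos {x : n → ℝ} (hx : x ≠ 0) : 0 < nsq x := by
  obtain ⟨i, hi⟩ : ∃ i, x i ≠ 0 := by
    by_contra h
    push_neg at h
    exact hx (funext h)
  have : (0:ℝ) < x i ^ 2 := by positivity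
  unfold nsq
  calc (0:ℝ) < x i ^ 2 := this
    _ ≤ ∑ i, x i ^ 2 := Finset.single_le_sum (fun i _ => sq_nonneg (x i)) (Finset.mem_univ i)

lemma trace_mul_diag (G D : Matrix p p ℝ) [DecidableEq p] (hD : D.IsDiag) :
    (G * D).trace = ∑ i, D i i * G i i := by
  rw [← hD.diagonal_diag]
  unfold Matrix.trace Matrix.diag
  congr 1; funext i
  rw [Matrix.mul_apply]
  rw [Finset.sum_eq_single i (fun b _ hb => by simp [Matrix.diagonal_apply_ne _ hb]) (by simp)]
  simp [Matrix.diagonal_apply_eq]; ring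

lemma isDiag_transpose_eq {D : Matrix p p ℝ} [DecidableEq p] (hD : D.IsDiag) : Dᵀ = D := by
  rw [← hD.diagonal_diag, Matrix.diagonal_transpose]

lemma exists_ker_vec {K : ℕ} (hK : 0 < K) (A : Matrix (Fin K) (Fin K) ℝ) (j : Fin K) :
    ∃ a : Fin K → ℝ, a ≠ 0 ∧ ∀ i, i ≠ j → (A *ᵥ a) i = 0 := by
  set f : (Fin K → ℝ) →ₗ[ℝ] ({i : Fin K // i ≠ j} → ℝ) :=
    (LinearMap.funLeft ℝ ℝ (Subtype.val : {i : Fin K // i ≠ j} → Fin K)).comp A.mulVecLin with hf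
  by_contra h
  push_neg at h
  have hinj : Function.Injective f := by
    rw [injective_iff_map_eq_zero]
    intro a ha
    by_contra ha0
    obtain ⟨i, hij, hi⟩ := h a ha0
    apply hi
    have := congrFun ha ⟨i, hij⟩
    simpa [hf, LinearMap.funLeft] using this
  have hle := LinearMap.finrank_le_finrank_of_injective hinj
  rw [Module.finrank_pi, Module.finrank_pi] at hle
  have hcard : Fintype.card {i : Fin K // i ≠ j} = K - 1 := by
    have h1 : Fintype.card {i : Fin K // ¬ (i = j)} = Fintype.card (Fin K) -
        Fintype.card {i : Fin K // i = j} := Fintype.card_subtype_compl _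
    simpa [Fintype.card_subtype_eq] using h1
  rw [hcard, Fintype.card_fin] at hle
  omega


end Helpers

section Proc
variable {K : Type*} [Fintype K] [DecidableEq K]

lemma star_eq_transpose (A : Matrix K K ℝ) : star A = Aᵀ := by
  rw [Matrix.star_eq_conjTranspose, Matrix.conjTranspose_eq_transpose_of_trivial]

lemma procrustes (Z : Matrix K K ℝ) (h1 : (1 - Zᵀ * Z).PosSemidef) :
    ∃ R : Matrix K K ℝ, Rᵀ * R = 1 ∧ (Zᵀ * Z).trace ≤ (Rᵀ * Z).trace := by
  classical
  have hH : (Zᵀ * Z).PosSemidef := by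
    have := Matrix.posSemidef_conjTranspose_mul_self Z
    rwa [Matrix.conjTranspose_eq_transpose_of_trivial] at this
  set H := Zᵀ * Z with hHdef
  have hHerm : H.IsHermitian := hH.1
  set d := hHerm.eigenvalues with hd
  have hd0 : ∀ i, 0 ≤ d i := hH.eigenvalues_nonneg
  set Q : Matrix K K ℝ := (hHerm.eigenvectorUnitary : Matrix K K ℝ) with hQ
  have hQmem := hHerm.eigenvectorUnitary.2
  have hQQ : Qᵀ * Q = 1 := by
    rw [← star_eq_transpose]; exact (Matrix.mem_unitaryGroup_iff').mp hQmem
  have hQQ' : Q * Qᵀ = 1 := by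
    rw [← star_eq_transpose]; exact (Matrix.mem_unitaryGroup_iff).mp hQmem
  have hdiagd : Matrix.diagonal (RCLike.ofReal ∘ d) = Matrix.diagonal d := by
    congr 1
  have hspec : Qᵀ * H * Q = Matrix.diagonal d := by
    have := hHerm.spectral_theorem
    rw [Unitary.conjStarAlgAut_apply, star_eq_transpose, hdiagd, ← hQ] at this
    rw [this]; simp only [Matrix.mul_assoc]
    rw [← Matrix.mul_assoc Qᵀ Q, hQQ, Matrix.one_mul, Matrix.mul_one]
  -- columns of B := Z * Q
  set B := Z * Q with hB
  have hBB : Bᵀ * B = Matrix.diagonal d := by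
    rw [hB, Matrix.transpose_mul, ← hspec, hHdef]
    simp only [Matrix.mul_assoc]
  have hBcol : ∀ i j, ∑ x, B x i * B x j = Matrix.diagonal d i j := by
    intro i j
    rw [← hBB]
    simp [Matrix.mul_apply, Matrix.transpose_apply]
  -- eigenvalues are ≤ 1
  have hd1 : ∀ i, d i ≤ 1 := by
    intro i
    have hv := hHerm.mulVec_eigenvectorBasis i
    set v : K → ℝ := ⇑(hHerm.eigenvectorBasis i) with hvdef
    have hvnorm : (star v) ⬝ᵥ v = 1 := by
      have h2 : ‖hHerm.eigenvectorBasis i‖ = 1 := hHerm.eigenvectorBasis.orthonormal.1 i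
      have h3 : (star v) ⬝ᵥ v = ∑ x, v x * v x := by
        simp [dotProduct, star]
      have h4 : ‖hHerm.eigenvectorBasis i‖ ^ 2 = ∑ x, v x * v x := by
        rw [← real_inner_self_eq_norm_sq, PiLp.inner_apply]
        simp only [RCLike.inner_apply', conj_trivial]; rfl
      rw [h3, ← h4, h2]; norm_num
    have hpsd := h1.dotProduct_mulVec_nonneg v
    rw [Matrix.sub_mulVec, dotProduct_sub, Matrix.one_mulVec, hv] at hpsd
    have : (star v) ⬝ᵥ (d i • v) = d i := by
      rw [dotProduct_smul, hvnorm]; simp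
    rw [this, hvnorm] at hpsd
    linarith
  -- trace H = sum of eigenvalues
  have htrH : H.trace = ∑ i, d i := by
    have h5 : H = Q * Matrix.diagonal d * Qᵀ := by
      have := hHerm.spectral_theorem
      rw [Unitary.conjStarAlgAut_apply, star_eq_transpose, hdiagd] at this
      exact this
    rw [h5, Matrix.trace_mul_comm, ← Matrix.mul_assoc, hQQ, Matrix.one_mul,
      Matrix.trace_diagonal]
  -- the orthonormal family on s
  set s : Set K := {i | d i ≠ 0} with hs
  set v : K → EuclideanSpace ℝ K :=
    fun i => (Real.sqrt (d i))⁻¹ • (WithLp.equiv 2 (K → ℝ)).symm (fun x => B x i) with hv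
  have hinner : ∀ a b : K, (inner ℝ (v a) (v b) : ℝ)
      = (Real.sqrt (d a))⁻¹ * (Real.sqrt (d b))⁻¹ * ∑ x, B x a * B x b := by
    intro a b
    rw [hv]
    rw [real_inner_smul_left, real_inner_smul_right, PiLp.inner_apply]
    simp only [RCLike.inner_apply', conj_trivial]
    have he : ∑ x, (WithLp.equiv 2 (K → ℝ)).symm (fun y => B y a) x
        * (WithLp.equiv 2 (K → ℝ)).symm (fun y => B y b) x = ∑ x, B x a * B x b := rfl
    rw [he]; ring
  have hvorth : Orthonormal ℝ (s.restrict v) := by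
    rw [orthonormal_iff_ite]
    intro i j
    rw [show s.restrict v i = v i from rfl, show s.restrict v j = v j from rfl, hinner, hBcol]
    by_cases hij : i = j
    · subst hij
      simp only [Matrix.diagonal_apply_eq, if_pos rfl, eq_self_iff_true, if_true]
      have hdi : d i.1 ≠ 0 := i.2
      have hsq : Real.sqrt (d i.1) * Real.sqrt (d i.1) = d i.1 :=
        Real.mul_self_sqrt (hd0 i.1)
      have hsn : Real.sqrt (d i.1) ≠ 0 := by
        intro h; rw [h, mul_zero] at hsq; exact hdi hsq.symm
      rw [← hsq]
      field_simp
      rw [Real.sqrt_sq (Real.sqrt_nonneg _)]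
    · have hij' : (i : K) ≠ (j : K) := fun h => hij (Subtype.ext h)
      rw [Matrix.diagonal_apply_ne _ hij', if_neg hij]
      ring
  obtain ⟨b, hb⟩ := hvorth.exists_orthonormalBasis_extension_of_card_eq
    (finrank_euclideanSpace (𝕜 := ℝ) (ι := K))
  set A : Matrix K K ℝ := Matrix.of (fun x i => b i x) with hA
  have hAA : Aᵀ * A = 1 := by
    ext i j
    have := b.orthonormal
    rw [orthonormal_iff_ite] at this
    have h6 := this i j
    rw [PiLp.inner_apply] at h6
    simp only [RCLike.inner_apply', conj_trivial] at h6
    rw [Matrix.mul_apply]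
    simp only [hA, Matrix.transpose_apply, Matrix.of_apply]
    rw [h6, Matrix.one_apply]
  refine ⟨A * Qᵀ, ?_, ?_⟩
  · rw [Matrix.transpose_mul, Matrix.transpose_transpose, Matrix.mul_assoc,
      ← Matrix.mul_assoc Aᵀ A Qᵀ, hAA, Matrix.one_mul, hQQ']
  · -- trace bound
    have htr : ((A * Qᵀ)ᵀ * Z).trace = (Aᵀ * B).trace := by
      rw [Matrix.transpose_mul, Matrix.transpose_transpose, Matrix.mul_assoc,
        Matrix.trace_mul_comm, hB, ← Matrix.mul_assoc, Matrix.mul_assoc]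
    rw [htr, htrH]
    have hdiagAB : ∀ i, (Aᵀ * B) i i = inner ℝ (b i) ((WithLp.equiv 2 (K → ℝ)).symm (fun x => B x i)) := by
      intro i
      rw [Matrix.mul_apply, PiLp.inner_apply]
      simp only [RCLike.inner_apply', conj_trivial, hA, Matrix.transpose_apply, Matrix.of_apply]
      rfl
    have hterm : ∀ i, d i ≤ (Aᵀ * B) i i := by
      intro i
      by_cases hi : d i = 0
      · -- column is zero
        have hcol : ∀ x, B x i = 0 := by
          intro x
          have h7 := hBcol i i
          rw [Matrix.diagonal_apply_eq, hi] at h7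
          have h8 : ∀ y ∈ Finset.univ, (0:ℝ) ≤ B y i * B y i := fun y _ => mul_self_nonneg _
          have := (Finset.sum_eq_zero_iff_of_nonneg h8).mp h7 x (Finset.mem_univ x)
          nlinarith [this]
        have : (Aᵀ * B) i i = 0 := by
          rw [Matrix.mul_apply]
          apply Finset.sum_eq_zero
          intro x _
          rw [hcol x]; ring
        rw [this, hi]
      · have hbi : b i = v i := hb i hi
        rw [hdiagAB i, hbi, hv]
        have : (inner ℝ ((Real.sqrt (d i))⁻¹ • (WithLp.equiv 2 (K → ℝ)).symm (fun x => B x i))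
            ((WithLp.equiv 2 (K → ℝ)).symm (fun x => B x i)) : ℝ)
            = (Real.sqrt (d i))⁻¹ * ∑ x, B x i * B x i := by
          rw [real_inner_smul_left, PiLp.inner_apply]
          simp only [RCLike.inner_apply', conj_trivial]
          rfl
        rw [this, hBcol i i, Matrix.diagonal_apply_eq]
        have hsq : Real.sqrt (d i) * Real.sqrt (d i) = d i := Real.mul_self_sqrt (hd0 i)
        have hsqpos : 0 < Real.sqrt (d i) := Real.sqrt_pos.mpr (lt_of_le_of_ne (hd0 i) (Ne.symm hi))
        have hsqle1 : Real.sqrt (d i) ≤ 1 := by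
          nlinarith [hd1 i]
        have h10 : (Real.sqrt (d i))⁻¹ * Real.sqrt (d i) = 1 :=
          inv_mul_cancel₀ (ne_of_gt hsqpos)
        nlinarith [mul_nonneg (inv_nonneg.mpr hsqpos.le) (sub_nonneg.mpr hsqle1), hd0 i,
          mul_nonneg (sub_nonneg.mpr (show (1:ℝ) ≤ (Real.sqrt (d i))⁻¹ by nlinarith)) (hd0 i)]
    calc ∑ i, d i ≤ ∑ i, (Aᵀ * B) i i := Finset.sum_le_sum (fun i _ => hterm i)
      _ = (Aᵀ * B).trace := rfl

end Proc
end Wedin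
open Wedin in
/-- Deterministic singular-subspace perturbation bound (Wedin).
There is a universal constant `C > 0` such that: if `M = U D_M Vᵀ` is a compact SVD
of the rank-`K` matrix `M` whose smallest (nonzero) singular value is `λ_K > 0`, and
`M̂ = Û D̂ V̂ᵀ + Ê` where `Û, V̂` carry orthonormal singular vectors of `M̂` for its
`K` largest singular values (so `ÛᵀÊ = 0`, `ÊV̂ = 0`, `‖Ê‖ ≤ min_i D̂ᵢᵢ`), then
`‖M̂ − M‖ ≤ λ_K/2` implies that for some `K×K` orthogonal `R`,
`max{‖Û − UR‖_F, ‖V̂ − VR‖_F} ≤ C‖M̂ − M‖_F/λ_K`. -/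
theorem wedin_singular_subspace_bound :
    ∃ C : ℝ, 0 < C ∧
      ∀ (N T K : ℕ), 0 < K →
      ∀ (M Mh : Matrix (Fin N) (Fin T) ℝ)
        (U Uh : Matrix (Fin N) (Fin K) ℝ) (V Vh : Matrix (Fin T) (Fin K) ℝ)
        (DM Dh : Matrix (Fin K) (Fin K) ℝ) (lamK : ℝ),
        M.rank = K → 0 < lamK →
        Uᵀ * U = 1 → Vᵀ * V = 1 →
        DM.IsDiag → (∀ i, lamK ≤ DM i i) → (∃ i, DM i i = lamK) →
        M = U * DM * Vᵀ →
        Uhᵀ * Uh = 1 → Vhᵀ * Vh = 1 →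
        Dh.IsDiag → (∀ i, 0 ≤ Dh i i) →
        Uhᵀ * (Mh - Uh * Dh * Vhᵀ) = 0 → (Mh - Uh * Dh * Vhᵀ) * Vh = 0 →
        (∀ i, opNorm (Mh - Uh * Dh * Vhᵀ) ≤ Dh i i) →
        opNorm (Mh - M) ≤ lamK / 2 →
        ∃ R : Matrix (Fin K) (Fin K) ℝ, Rᵀ * R = 1 ∧
          max (frob (Uh - U * R)) (frob (Vh - V * R)) ≤
            C * frob (Mh - M) / lamK := by
  refine ⟨8, by norm_num, ?_⟩
  intro N T K hK M Mh U Uh V Vh DM Dh lamK hrank hlam hU hV hDM hDMge hDMmin hM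
    hUh hVh hDh hDh0 hUhE hEVh hEop hop
  classical
  set E := Mh - M with hE
  set Eh := Mh - Uh * Dh * Vhᵀ with hEh
  have hs2 : (0:ℝ) < Real.sqrt 2 := by positivity
  have hs2sq : Real.sqrt 2 * Real.sqrt 2 = 2 := Real.mul_self_sqrt (by norm_num)
  have hs2le : Real.sqrt 2 ≤ 2 := by nlinarith
  -- STEP D : every Dh j j is at least lamK / (2 √2)
  have hDhge : ∀ j, lamK / 2 ≤ Real.sqrt 2 * Dh j j := by
    intro j
    obtain ⟨a, ha0, hker⟩ := Wedin.exists_ker_vec hK (Vhᵀ * V) j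
    set vv := V *ᵥ a with hvv
    have hnsqvv : nsq vv = nsq a := Wedin.nsq_mulVec_orth V hV a
    have henvv : Wedin.enorm vv = Wedin.enorm a := by rw [Wedin.enorm_eq, Wedin.enorm_eq, hnsqvv]
    have hena : 0 < Wedin.enorm a := by
      rw [Wedin.enorm_eq]; exact Real.sqrt_pos.mpr (Wedin.nsq_pos ha0)
    -- lower bound for ‖M vv‖
    have hMvv : M *ᵥ vv = U *ᵥ (DM *ᵥ a) := by
      rw [hvv, Matrix.mulVec_mulVec, hM, Matrix.mul_assoc (U * DM) Vᵀ V, hV, Matrix.mul_one,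
        ← Matrix.mulVec_mulVec]
    have hnsqM : lamK ^ 2 * nsq a ≤ nsq (M *ᵥ vv) := by
      rw [hMvv, Wedin.nsq_mulVec_orth U hU]
      unfold Wedin.nsq
      rw [Finset.mul_sum]
      apply Finset.sum_le_sum
      intro i _
      rw [Wedin.mulVec_isDiag DM hDM, mul_pow]
      have h1 : lamK ≤ DM i i := hDMge i
      have h2 : lamK ^ 2 ≤ DM i i ^ 2 := by nlinarith
      exact mul_le_mul_of_nonneg_right h2 (sq_nonneg (a i))
    have heM : lamK * Wedin.enorm a ≤ Wedin.enorm (M *ᵥ vv) := by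
      rw [Wedin.enorm_eq, Wedin.enorm_eq]
      have h2 : lamK * Real.sqrt (nsq a) = Real.sqrt (lamK ^ 2 * nsq a) := by
        rw [Real.sqrt_mul (sq_nonneg lamK), Real.sqrt_sq hlam.le]
      rw [h2]
      exact Real.sqrt_le_sqrt hnsqM
    -- triangle inequality
    have hEvv : Wedin.enorm (E *ᵥ vv) ≤ lamK / 2 * Wedin.enorm a := by
      calc Wedin.enorm (E *ᵥ vv) ≤ opNorm E * Wedin.enorm vv := Wedin.enorm_mulVec_le E vv
        _ ≤ lamK / 2 * Wedin.enorm a := by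
            rw [henvv]
            exact mul_le_mul_of_nonneg_right hop (Wedin.enorm_nonneg _)
    have htri : lamK * Wedin.enorm a ≤ Wedin.enorm (Mh *ᵥ vv) + lamK / 2 * Wedin.enorm a := by
      have hsplit : M *ᵥ vv = Mh *ᵥ vv - E *ᵥ vv := by
        rw [hE, Matrix.sub_mulVec]; abel
      calc lamK * Wedin.enorm a ≤ Wedin.enorm (M *ᵥ vv) := heM
        _ = Wedin.enorm (Mh *ᵥ vv - E *ᵥ vv) := by rw [hsplit]
        _ ≤ Wedin.enorm (Mh *ᵥ vv) + Wedin.enorm (E *ᵥ vv) := Wedin.enorm_sub_le _ _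
        _ ≤ _ := by linarith
    -- upper bound for ‖Mh vv‖
    set w := Vhᵀ *ᵥ vv with hw
    have hwker : ∀ i, i ≠ j → w i = 0 := by
      intro i hij
      rw [hw, hvv, Matrix.mulVec_mulVec]
      exact hker i hij
    have hMhvv : Mh *ᵥ vv = Uh *ᵥ (Dh *ᵥ w) + Eh *ᵥ vv := by
      have hms : Mh = Uh * Dh * Vhᵀ + Eh := by rw [hEh]; abel
      have h1 : Uh *ᵥ (Dh *ᵥ w) = (Uh * Dh * Vhᵀ) *ᵥ vv := by
        rw [hw, Matrix.mulVec_mulVec vv Dh Vhᵀ, Matrix.mulVec_mulVec vv Uh (Dh * Vhᵀ),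
          Matrix.mul_assoc]
      rw [h1, ← Matrix.add_mulVec, ← hms]
    have hUhEh : Uhᵀ * Eh = 0 := hUhE
    have hcross : (Uh *ᵥ (Dh *ᵥ w)) ⬝ᵥ (Eh *ᵥ vv) = 0 := by
      have h0 : Uhᵀ *ᵥ (Eh *ᵥ vv) = 0 := by
        rw [Matrix.mulVec_mulVec vv Uhᵀ Eh, hUhEh, Matrix.zero_mulVec]
      rw [Wedin.dot_mulVec_left, h0, dotProduct_zero]
    have hnsqDh : nsq (Dh *ᵥ w) = (Dh j j * w j) ^ 2 := by
      unfold Wedin.nsq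
      rw [Finset.sum_eq_single j
        (fun b _ hb => by rw [Wedin.mulVec_isDiag Dh hDh, hwker b hb, mul_zero]; norm_num)
        (fun h => absurd (Finset.mem_univ j) h)]
      rw [Wedin.mulVec_isDiag Dh hDh]
    have hwj : w j ^ 2 ≤ nsq a := by
      have hwj' : w j = ∑ x, Vh x j * vv x := by
        rw [hw]
        simp [Matrix.mulVec, dotProduct, Matrix.transpose_apply]
      have hcs := Finset.sum_mul_sq_le_sq_mul_sq Finset.univ (fun x => Vh x j) vv
      have hcol : ∑ x, Vh x j ^ 2 = 1 := by
        have h3 := congrFun (congrFun hVh j) j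
        simp only [Matrix.mul_apply, Matrix.transpose_apply, Matrix.one_apply_eq] at h3
        rw [← h3]
        apply Finset.sum_congr rfl
        intro x _
        ring
      rw [hwj']
      calc (∑ x, Vh x j * vv x) ^ 2 ≤ (∑ x, Vh x j ^ 2) * ∑ x, vv x ^ 2 := hcs
        _ = nsq a := by rw [hcol, one_mul, ← hnsqvv]; rfl
    have hnsqEh : nsq (Eh *ᵥ vv) ≤ Dh j j ^ 2 * nsq a := by
      have h4 : Wedin.enorm (Eh *ᵥ vv) ≤ Dh j j * Wedin.enorm a := by
        calc Wedin.enorm (Eh *ᵥ vv) ≤ opNorm Eh * Wedin.enorm vv := Wedin.enorm_mulVec_le Eh vv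
          _ ≤ Dh j j * Wedin.enorm a := by
              rw [henvv]
              exact mul_le_mul_of_nonneg_right (hEop j) (Wedin.enorm_nonneg _)
      have h5 := Wedin.enorm_nonneg (Eh *ᵥ vv)
      rw [nsq_eq_enorm_sq, nsq_eq_enorm_sq]
      nlinarith [Wedin.enorm_nonneg a]
    have hnsqMh : nsq (Mh *ᵥ vv) ≤ 2 * (Dh j j ^ 2 * nsq a) := by
      rw [hMhvv, Wedin.nsq_add, hcross, Wedin.nsq_mulVec_orth Uh hUh, hnsqDh]
      have h6 : (Dh j j * w j) ^ 2 ≤ Dh j j ^ 2 * nsq a := by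
        rw [mul_pow]
        exact mul_le_mul_of_nonneg_left hwj (sq_nonneg _)
      linarith
    have heMh : Wedin.enorm (Mh *ᵥ vv) ≤ Real.sqrt 2 * (Dh j j * Wedin.enorm a) := by
      rw [Wedin.enorm_eq]
      have h7 : Real.sqrt 2 * (Dh j j * Wedin.enorm a) =
          Real.sqrt (2 * (Dh j j ^ 2 * nsq a)) := by
        rw [Real.sqrt_mul (by norm_num : (0:ℝ) ≤ 2), Real.sqrt_mul (sq_nonneg _),
          Real.sqrt_sq (hDh0 j), Wedin.enorm_eq]
      rw [h7]
      exact Real.sqrt_le_sqrt hnsqMh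
    -- combine
    have hfin : lamK * Wedin.enorm a ≤ Real.sqrt 2 * (Dh j j * Wedin.enorm a) + lamK / 2 * Wedin.enorm a :=
      le_trans htri (by linarith)
    have := hena
    nlinarith [hfin, hena]
  -- PART 2 : sin-theta argument
  set Z := (1/2 : ℝ) • (Uᵀ * Uh + Vᵀ * Vh) with hZ
  set Y₁ := Uh - U * Z with hY₁
  set Y₂ := Vh - V * Z with hY₂
  have hUZ : Uh = Y₁ + U * Z := by rw [hY₁]; abel
  have hVZ : Vh = Y₂ + V * Z := by rw [hY₂]; abel
  have hZZ : Z + Z = Uᵀ * Uh + Vᵀ * Vh := by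
    rw [hZ, ← add_smul]; norm_num
  have horth : Uᵀ * Y₁ + Vᵀ * Y₂ = 0 := by
    rw [hY₁, hY₂, Matrix.mul_sub, Matrix.mul_sub, ← Matrix.mul_assoc, ← Matrix.mul_assoc,
      hU, hV, Matrix.one_mul]
    have harr : Uᵀ * Uh - Z + (Vᵀ * Vh - Z) = Uᵀ * Uh + Vᵀ * Vh - (Z + Z) := by abel
    rw [harr, ← hZZ, sub_self]
  have horthT : Y₁ᵀ * U + Y₂ᵀ * V = 0 := by
    have h1 := congrArg Matrix.transpose horth
    simpa [Matrix.transpose_add, Matrix.transpose_mul, Matrix.transpose_transpose] using h1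
  set G := Y₁ᵀ * Y₁ + Y₂ᵀ * Y₂ with hG
  have hcross1 : Y₁ᵀ * Uh + Y₂ᵀ * Vh = G := by
    conv_lhs => rw [hUZ, hVZ]
    rw [Matrix.mul_add, Matrix.mul_add, ← Matrix.mul_assoc, ← Matrix.mul_assoc, hG]
    have h2 : Y₁ᵀ * U * Z + Y₂ᵀ * V * Z = 0 := by
      rw [← Matrix.add_mul, horthT, Matrix.zero_mul]
    calc Y₁ᵀ * Y₁ + Y₁ᵀ * U * Z + (Y₂ᵀ * Y₂ + Y₂ᵀ * V * Z)
        = Y₁ᵀ * Y₁ + Y₂ᵀ * Y₂ + (Y₁ᵀ * U * Z + Y₂ᵀ * V * Z) := by abel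
      _ = Y₁ᵀ * Y₁ + Y₂ᵀ * Y₂ := by rw [h2, add_zero]
  -- singular-vector relations for Mh
  have hMhVh : Mh * Vh = Uh * Dh := by
    have h3 : Mh * Vh - Uh * Dh * Vhᵀ * Vh = 0 := by
      rw [← Matrix.sub_mul, ← hEh]; exact hEVh
    have h4 : Uh * Dh * Vhᵀ * Vh = Uh * Dh := by
      rw [Matrix.mul_assoc (Uh * Dh) Vhᵀ Vh, hVh, Matrix.mul_one]
    rw [h4] at h3
    exact sub_eq_zero.mp h3
  have hDhT : Dhᵀ = Dh := Wedin.isDiag_transpose_eq hDh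
  have hMhTUh : Mhᵀ * Uh = Vh * Dh := by
    have h1 := congrArg Matrix.transpose hUhE
    rw [Matrix.transpose_mul, Matrix.transpose_zero, Matrix.transpose_transpose] at h1
    -- h1 : Ehᵀ * Uh = 0
    have h2 : Ehᵀ = Mhᵀ - Vh * Dh * Uhᵀ := by
      rw [hEh, Matrix.transpose_sub, Matrix.transpose_mul, Matrix.transpose_mul,
        Matrix.transpose_transpose, hDhT, Matrix.mul_assoc]
    rw [h2, Matrix.sub_mul] at h1
    have h4 : Vh * Dh * Uhᵀ * Uh = Vh * Dh := by
      rw [Matrix.mul_assoc (Vh * Dh) Uhᵀ Uh, hUh, Matrix.mul_one]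
    rw [h4] at h1
    exact sub_eq_zero.mp h1
  -- trace quantities
  have hGdiag : ∀ i, G i i = (∑ x, Y₁ x i ^ 2) + (∑ x, Y₂ x i ^ 2) := by
    intro i
    rw [hG, Matrix.add_apply, Matrix.mul_apply, Matrix.mul_apply]
    congr 1
    · apply Finset.sum_congr rfl
      intro x _
      rw [Matrix.transpose_apply]
      ring
    · apply Finset.sum_congr rfl
      intro x _
      rw [Matrix.transpose_apply]
      ring
  have hGnn : ∀ i, 0 ≤ G i i := by
    intro i; rw [hGdiag i]; positivity
  have htrG : G.trace = fsq Y₁ + fsq Y₂ := by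
    rw [hG, Matrix.trace_add, ← fsq_eq_trace, ← fsq_eq_trace]
  have htrGnn : 0 ≤ G.trace := by
    rw [htrG]; have := fsq_nonneg Y₁; have := fsq_nonneg Y₂; linarith
  -- lower bound
  have hT1G : (Y₁ᵀ * (Uh * Dh)).trace + (Y₂ᵀ * (Vh * Dh)).trace = (G * Dh).trace := by
    rw [← Matrix.mul_assoc, ← Matrix.mul_assoc, ← Matrix.trace_add, ← Matrix.add_mul, hcross1]
  have hlow : lamK / 2 * G.trace ≤ Real.sqrt 2 * (G * Dh).trace := by
    rw [Wedin.trace_mul_diag G Dh hDh, Wedin.trace_eq_sum, Finset.mul_sum, Finset.mul_sum]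
    apply Finset.sum_le_sum
    intro i _
    have h5 := hDhge i
    have h6 := hGnn i
    nlinarith
  -- splitting
  have hMhME : Mh = M + E := by rw [hE]; abel
  have hsplit1 : Uh * Dh = M * Vh + E * Vh := by
    rw [← hMhVh, hMhME, Matrix.add_mul]
  have hsplit2 : Vh * Dh = Mᵀ * Uh + Eᵀ * Uh := by
    rw [← hMhTUh, hMhME, Matrix.transpose_add, Matrix.add_mul]
  -- TS ≤ 0
  have hMV : M * V = U * DM := by
    rw [hM, Matrix.mul_assoc (U * DM) Vᵀ V, hV, Matrix.mul_one]
  have hDMT : DMᵀ = DM := Wedin.isDiag_transpose_eq hDM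
  have hMTU : Mᵀ * U = V * DM := by
    rw [hM]
    have ht : (U * DM * Vᵀ)ᵀ = V * (DM * Uᵀ) := by
      rw [Matrix.transpose_mul, Matrix.transpose_mul, Matrix.transpose_transpose, hDMT]
    rw [ht, Matrix.mul_assoc V (DM * Uᵀ) U, Matrix.mul_assoc DM Uᵀ U, hU, Matrix.mul_one]
  set H0 := Uᵀ * Y₁ with hH0
  have hVY₂ : Vᵀ * Y₂ = -H0 := by
    rw [hH0]; rw [← sub_eq_zero]; rw [sub_neg_eq_add, add_comm]; exact horth
  have hTS : (Y₁ᵀ * (M * Vh)).trace + (Y₂ᵀ * (Mᵀ * Uh)).trace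
      = -(2 * (H0ᵀ * (DM * H0)).trace) := by
    have e1 : Y₁ᵀ * (M * Vh) = Y₁ᵀ * (M * Y₂) + (Y₁ᵀ * U) * (DM * Z) := by
      conv_lhs => rw [hVZ]
      rw [Matrix.mul_add M, Matrix.mul_add Y₁ᵀ, ← Matrix.mul_assoc M V Z, hMV,
        Matrix.mul_assoc U DM Z, ← Matrix.mul_assoc Y₁ᵀ U (DM * Z)]
    have e2 : Y₂ᵀ * (Mᵀ * Uh) = Y₂ᵀ * (Mᵀ * Y₁) + (Y₂ᵀ * V) * (DM * Z) := by
      conv_lhs => rw [hUZ]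
      rw [Matrix.mul_add Mᵀ, Matrix.mul_add Y₂ᵀ, ← Matrix.mul_assoc Mᵀ U Z, hMTU,
        Matrix.mul_assoc V DM Z, ← Matrix.mul_assoc Y₂ᵀ V (DM * Z)]
    have e3 : (Y₁ᵀ * U * (DM * Z)).trace + (Y₂ᵀ * V * (DM * Z)).trace = 0 := by
      rw [← Matrix.trace_add, ← Matrix.add_mul, horthT, Matrix.zero_mul, Matrix.trace_zero]
    have e4 : (Y₂ᵀ * (Mᵀ * Y₁)).trace = (Y₁ᵀ * (M * Y₂)).trace := by
      rw [← Matrix.trace_transpose (Y₂ᵀ * (Mᵀ * Y₁))]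
      congr 1
      rw [Matrix.transpose_mul, Matrix.transpose_mul, Matrix.transpose_transpose,
        Matrix.transpose_transpose, Matrix.mul_assoc]
    have e5 : (Y₁ᵀ * (M * Y₂)).trace = -(H0ᵀ * (DM * H0)).trace := by
      have f1 : M * Y₂ = -(U * (DM * H0)) := by
        rw [hM, Matrix.mul_assoc (U * DM) Vᵀ Y₂, hVY₂, Matrix.mul_assoc U DM (-H0)]
        rw [Matrix.mul_neg, Matrix.mul_neg]
      rw [f1, Matrix.mul_neg, Matrix.trace_neg]
      congr 2
      rw [← Matrix.mul_assoc Y₁ᵀ U (DM * H0)]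
      congr 1
      rw [hH0, Matrix.transpose_mul, Matrix.transpose_transpose]
    rw [e1, e2, Matrix.trace_add, Matrix.trace_add, e4, e5]
    have : (Y₁ᵀ * U * (DM * Z)).trace + (Y₂ᵀ * V * (DM * Z)).trace = 0 := e3
    linarith
  have hTSle : (Y₁ᵀ * (M * Vh)).trace + (Y₂ᵀ * (Mᵀ * Uh)).trace ≤ 0 := by
    rw [hTS]
    have h7 : (0:ℝ) ≤ (H0ᵀ * (DM * H0)).trace := by
      rw [Wedin.trace_transpose_diag_mul DM hDM H0]
      apply Finset.sum_nonneg
      intro i _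
      have : (0:ℝ) ≤ ∑ j, H0 i j ^ 2 := Finset.sum_nonneg (fun j _ => sq_nonneg _)
      nlinarith [hDMge i, hlam]
    linarith
  -- TF bound
  have hfrobEVh : frob (E * Vh) ≤ frob E := Wedin.frob_le_frob (Wedin.fsq_mul_orth E Vh hVh)
  have hfrobETUh : frob (Eᵀ * Uh) ≤ frob E := by
    have := Wedin.fsq_mul_orth Eᵀ Uh hUh
    rw [Wedin.fsq_transpose] at this
    exact Wedin.frob_le_frob this
  have hTF : (Y₁ᵀ * (E * Vh)).trace + (Y₂ᵀ * (Eᵀ * Uh)).trace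
      ≤ (frob Y₁ + frob Y₂) * frob E := by
    have g1 := Wedin.trace_le_frob_mul_frob Y₁ (E * Vh)
    have g2 := Wedin.trace_le_frob_mul_frob Y₂ (Eᵀ * Uh)
    have g3 : frob Y₁ * frob (E * Vh) ≤ frob Y₁ * frob E :=
      mul_le_mul_of_nonneg_left hfrobEVh (frob_nonneg Y₁)
    have g4 : frob Y₂ * frob (Eᵀ * Uh) ≤ frob Y₂ * frob E :=
      mul_le_mul_of_nonneg_left hfrobETUh (frob_nonneg Y₂)
    have g5 : (frob Y₁ + frob Y₂) * frob E = frob Y₁ * frob E + frob Y₂ * frob E := by ring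
    linarith
  -- combine trace estimates
  set y := Real.sqrt G.trace with hy
  have hynn : 0 ≤ y := Real.sqrt_nonneg _
  have hysq : y ^ 2 = G.trace := Real.sq_sqrt htrGnn
  have hfrobsum : frob Y₁ + frob Y₂ ≤ Real.sqrt 2 * y := by
    apply Wedin.le_of_sq_le_sq (add_nonneg (frob_nonneg _) (frob_nonneg _)) (mul_nonneg hs2.le hynn)
    have i1 : frob Y₁ ^ 2 = fsq Y₁ := by rw [frob_eq, Real.sq_sqrt (fsq_nonneg Y₁)]
    have i2 : frob Y₂ ^ 2 = fsq Y₂ := by rw [frob_eq, Real.sq_sqrt (fsq_nonneg Y₂)]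
    have i3 : (Real.sqrt 2 * y) ^ 2 = 2 * G.trace := by
      rw [mul_pow, Real.sq_sqrt (by norm_num : (0:ℝ) ≤ 2), hysq]
    rw [i3, htrG]
    nlinarith [sq_nonneg (frob Y₁ - frob Y₂), i1, i2]
  have hkey : lamK * y ≤ 4 * frob E := by
    have k1 : lamK / 2 * G.trace ≤ Real.sqrt 2 * ((frob Y₁ + frob Y₂) * frob E) := by
      have k2 : (G * Dh).trace = (Y₁ᵀ * (M * Vh)).trace + (Y₂ᵀ * (Mᵀ * Uh)).trace
          + ((Y₁ᵀ * (E * Vh)).trace + (Y₂ᵀ * (Eᵀ * Uh)).trace) := by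
        rw [← hT1G, hsplit1, hsplit2, Matrix.mul_add Y₁ᵀ, Matrix.mul_add Y₂ᵀ,
          Matrix.trace_add, Matrix.trace_add]
        ring
      have k3 : (G * Dh).trace ≤ (frob Y₁ + frob Y₂) * frob E := by
        rw [k2]; linarith
      calc lamK / 2 * G.trace ≤ Real.sqrt 2 * (G * Dh).trace := hlow
        _ ≤ Real.sqrt 2 * ((frob Y₁ + frob Y₂) * frob E) :=
            mul_le_mul_of_nonneg_left k3 hs2.le
    have k4 : Real.sqrt 2 * ((frob Y₁ + frob Y₂) * frob E)
        ≤ Real.sqrt 2 * (Real.sqrt 2 * y * frob E) := by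
      apply mul_le_mul_of_nonneg_left _ hs2.le
      exact mul_le_mul_of_nonneg_right hfrobsum (frob_nonneg E)
    have k5 : Real.sqrt 2 * (Real.sqrt 2 * y * frob E) = 2 * y * frob E := by
      rw [← mul_assoc, ← mul_assoc, hs2sq]
    have hyy : y * y = G.trace := by rw [← hysq]; ring
    have k6 : lamK / 2 * (y * y) ≤ 2 * (y * frob E) := by
      rw [hyy]
      have k5' : Real.sqrt 2 * ((frob Y₁ + frob Y₂) * frob E) ≤ 2 * (y * frob E) := by
        calc Real.sqrt 2 * ((frob Y₁ + frob Y₂) * frob E)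
            ≤ Real.sqrt 2 * (Real.sqrt 2 * y * frob E) := k4
          _ = 2 * (y * frob E) := by rw [← mul_assoc, ← mul_assoc, hs2sq]; ring
      linarith
    rcases eq_or_lt_of_le hynn with h8 | h8
    · rw [← h8, mul_zero]
      have := frob_nonneg E
      linarith
    · have k8 : (lamK * y) * y ≤ (4 * frob E) * y := by
        have : (lamK * y) * y = 2 * (lamK / 2 * (y * y)) := by ring
        rw [this]
        have h2' : (4 * frob E) * y = 2 * (2 * (y * frob E)) := by ring
        rw [h2']
        linarith
      exact le_of_mul_le_mul_right k8 h8
  -- Z is a contraction : 1 - ZᵀZ = (1/2)•G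
  have hZortho : (U * Z)ᵀ * (U * Z) = Zᵀ * Z := by
    rw [Matrix.transpose_mul, Matrix.mul_assoc, ← Matrix.mul_assoc Uᵀ U Z, hU, Matrix.one_mul]
  have hZorthoV : (V * Z)ᵀ * (V * Z) = Zᵀ * Z := by
    rw [Matrix.transpose_mul, Matrix.mul_assoc, ← Matrix.mul_assoc Vᵀ V Z, hV, Matrix.one_mul]
  have hGZZ : G + (Zᵀ * Z + Zᵀ * Z) = 1 + 1 := by
    have j1 : Uhᵀ * Uh = Y₁ᵀ * Y₁ + Y₁ᵀ * (U * Z) + ((U * Z)ᵀ * Y₁ + Zᵀ * Z) := by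
      conv_lhs => rw [hUZ]
      rw [Matrix.transpose_add, Matrix.add_mul, Matrix.mul_add, Matrix.mul_add, hZortho]
    have j2 : Vhᵀ * Vh = Y₂ᵀ * Y₂ + Y₂ᵀ * (V * Z) + ((V * Z)ᵀ * Y₂ + Zᵀ * Z) := by
      conv_lhs => rw [hVZ]
      rw [Matrix.transpose_add, Matrix.add_mul, Matrix.mul_add, Matrix.mul_add, hZorthoV]
    have j3 : Y₁ᵀ * (U * Z) + Y₂ᵀ * (V * Z) = 0 := by
      rw [← Matrix.mul_assoc, ← Matrix.mul_assoc, ← Matrix.add_mul, horthT, Matrix.zero_mul]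
    have j4 : (U * Z)ᵀ * Y₁ + (V * Z)ᵀ * Y₂ = 0 := by
      rw [Matrix.transpose_mul, Matrix.transpose_mul, Matrix.mul_assoc, Matrix.mul_assoc,
        ← Matrix.mul_add, horth, Matrix.mul_zero]
    have j5 := congrArg₂ (· + ·) j1 j2
    simp only [hUh, hVh] at j5
    calc G + (Zᵀ * Z + Zᵀ * Z)
        = Y₁ᵀ * Y₁ + Y₁ᵀ * (U * Z) + ((U * Z)ᵀ * Y₁ + Zᵀ * Z)
          + (Y₂ᵀ * Y₂ + Y₂ᵀ * (V * Z) + ((V * Z)ᵀ * Y₂ + Zᵀ * Z))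
          - (Y₁ᵀ * (U * Z) + Y₂ᵀ * (V * Z)) - ((U * Z)ᵀ * Y₁ + (V * Z)ᵀ * Y₂) := by
          rw [hG]; abel
      _ = 1 + 1 := by rw [← j5, j3, j4]; abel
  have hZZid : (1 : Matrix (Fin K) (Fin K) ℝ) - Zᵀ * Z = (1/2 : ℝ) • G := by
    have l1 : (1 : Matrix (Fin K) (Fin K) ℝ) - Zᵀ * Z
        = (1/2 : ℝ) • ((1 + 1) - (Zᵀ * Z + Zᵀ * Z)) := by
      rw [smul_sub]
      rw [show ((1:Matrix (Fin K) (Fin K) ℝ) + 1) = (2:ℝ) • (1:Matrix (Fin K) (Fin K) ℝ) by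
        rw [two_smul]]
      rw [show (Zᵀ * Z + Zᵀ * Z) = (2:ℝ) • (Zᵀ * Z) by rw [two_smul]]
      rw [smul_smul, smul_smul]
      norm_num
    rw [l1, ← hGZZ]
    congr 1
    abel
  have hPSD : ((1 : Matrix (Fin K) (Fin K) ℝ) - Zᵀ * Z).PosSemidef := by
    rw [hZZid]
    refine Matrix.PosSemidef.of_dotProduct_mulVec_nonneg ?_ ?_
    · have hGT : Gᵀ = G := by
        rw [hG, Matrix.transpose_add, Matrix.transpose_mul, Matrix.transpose_mul,
          Matrix.transpose_transpose, Matrix.transpose_transpose]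
      show ((1/2 : ℝ) • G)ᴴ = (1/2 : ℝ) • G
      rw [Matrix.conjTranspose_eq_transpose_of_trivial, Matrix.transpose_smul, hGT]
    · intro x
      have hsx : star x = x := by
        funext i; simp
      rw [hsx]
      have m1 : ((1/2 : ℝ) • G) *ᵥ x = (1/2 : ℝ) • (G *ᵥ x) := by
        rw [Matrix.smul_mulVec]
      rw [m1, dotProduct_smul]
      have m2 : x ⬝ᵥ (G *ᵥ x) = nsq (Y₁ *ᵥ x) + nsq (Y₂ *ᵥ x) := by
        rw [hG, Matrix.add_mulVec, dotProduct_add]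
        have m3 : x ⬝ᵥ ((Y₁ᵀ * Y₁) *ᵥ x) = nsq (Y₁ *ᵥ x) := by
          rw [← Matrix.mulVec_mulVec x Y₁ᵀ Y₁, ← Wedin.dot_mulVec_left, ← Wedin.nsq_eq_dot]
        have m4 : x ⬝ᵥ ((Y₂ᵀ * Y₂) *ᵥ x) = nsq (Y₂ *ᵥ x) := by
          rw [← Matrix.mulVec_mulVec x Y₂ᵀ Y₂, ← Wedin.dot_mulVec_left, ← Wedin.nsq_eq_dot]
        rw [m3, m4]
      rw [m2]
      have := Wedin.nsq_nonneg (Y₁ *ᵥ x)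
      have := Wedin.nsq_nonneg (Y₂ *ᵥ x)
      simp only [smul_eq_mul]
      linarith
  obtain ⟨R, hRR, hRtr⟩ := Wedin.procrustes Z hPSD
  refine ⟨R, hRR, ?_⟩
  -- final computation
  have hcardK : ((1 : Matrix (Fin K) (Fin K) ℝ)).trace = (K : ℝ) := by
    rw [Matrix.trace_one]; simp
  have hfsqU : fsq (Uh - U * R) = 2 * (K:ℝ) - 2 * (Rᵀ * (Uᵀ * Uh)).trace := by
    rw [fsq_eq_trace]
    have n1 : (Uh - U * R)ᵀ * (Uh - U * R)
        = Uhᵀ * Uh - (U * R)ᵀ * Uh - Uhᵀ * (U * R) + (U * R)ᵀ * (U * R) := by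
      rw [Matrix.transpose_sub, Matrix.sub_mul, Matrix.mul_sub, Matrix.mul_sub]
      abel
    have n2 : (U * R)ᵀ * (U * R) = 1 := by
      rw [Matrix.transpose_mul, Matrix.mul_assoc, ← Matrix.mul_assoc Uᵀ U R, hU,
        Matrix.one_mul, hRR]
    have n3 : (U * R)ᵀ * Uh = Rᵀ * (Uᵀ * Uh) := by
      rw [Matrix.transpose_mul, Matrix.mul_assoc]
    have n4 : (Uhᵀ * (U * R)).trace = (Rᵀ * (Uᵀ * Uh)).trace := by
      rw [← Matrix.trace_transpose (Uhᵀ * (U * R)), Matrix.transpose_mul,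
        Matrix.transpose_transpose, Matrix.transpose_mul, Matrix.mul_assoc]
    rw [n1, n2, n3, Matrix.trace_add, Matrix.trace_sub, Matrix.trace_sub, n4, hUh, hcardK]
    ring
  have hfsqV : fsq (Vh - V * R) = 2 * (K:ℝ) - 2 * (Rᵀ * (Vᵀ * Vh)).trace := by
    rw [fsq_eq_trace]
    have n1 : (Vh - V * R)ᵀ * (Vh - V * R)
        = Vhᵀ * Vh - (V * R)ᵀ * Vh - Vhᵀ * (V * R) + (V * R)ᵀ * (V * R) := by
      rw [Matrix.transpose_sub, Matrix.sub_mul, Matrix.mul_sub, Matrix.mul_sub]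
      abel
    have n2 : (V * R)ᵀ * (V * R) = 1 := by
      rw [Matrix.transpose_mul, Matrix.mul_assoc, ← Matrix.mul_assoc Vᵀ V R, hV,
        Matrix.one_mul, hRR]
    have n3 : (V * R)ᵀ * Vh = Rᵀ * (Vᵀ * Vh) := by
      rw [Matrix.transpose_mul, Matrix.mul_assoc]
    have n4 : (Vhᵀ * (V * R)).trace = (Rᵀ * (Vᵀ * Vh)).trace := by
      rw [← Matrix.trace_transpose (Vhᵀ * (V * R)), Matrix.transpose_mul,
        Matrix.transpose_transpose, Matrix.transpose_mul, Matrix.mul_assoc]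
    rw [n1, n2, n3, Matrix.trace_add, Matrix.trace_sub, Matrix.trace_sub, n4, hVh, hcardK]
    ring
  have hsumtr : (Rᵀ * (Uᵀ * Uh)).trace + (Rᵀ * (Vᵀ * Vh)).trace = 2 * (Rᵀ * Z).trace := by
    rw [← Matrix.trace_add, ← Matrix.mul_add, ← hZZ, Matrix.mul_add, Matrix.trace_add]
    ring
  have htr1Z : ((1 : Matrix (Fin K) (Fin K) ℝ) - Zᵀ * Z).trace
      = (K:ℝ) - (Zᵀ * Z).trace := by
    rw [Matrix.trace_sub, hcardK]
  have htrhalfG : ((1/2 : ℝ) • G).trace = 1/2 * G.trace := by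
    rw [Matrix.trace_smul]; simp
  have hfsqsum : fsq (Uh - U * R) + fsq (Vh - V * R) ≤ 2 * G.trace := by
    have p1 : fsq (Uh - U * R) + fsq (Vh - V * R) = 4 * (K:ℝ) - 4 * (Rᵀ * Z).trace := by
      rw [hfsqU, hfsqV]
      have := hsumtr
      linarith
    have p2 : (K:ℝ) - (Zᵀ * Z).trace = 1/2 * G.trace := by
      rw [← htr1Z, hZZid, htrhalfG]
    have p3 : (Zᵀ * Z).trace ≤ (Rᵀ * Z).trace := hRtr
    rw [p1]
    linarith
  -- conclude
  have hylam : y ≤ 4 * frob E / lamK := by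
    rw [le_div_iff₀ hlam]
    linarith [hkey]
  have hbound : ∀ A : Matrix (Fin N) (Fin T) ℝ, ∀ W : Matrix (Fin N) (Fin K) ℝ,
      True := fun _ _ => trivial
  have hfinU : frob (Uh - U * R) ≤ 8 * frob E / lamK := by
    have q1 : fsq (Uh - U * R) ≤ 2 * G.trace := by
      have := fsq_nonneg (Vh - V * R); linarith
    have q2 : frob (Uh - U * R) ≤ Real.sqrt (2 * G.trace) := by
      rw [frob_eq]; exact Real.sqrt_le_sqrt q1
    have q3 : Real.sqrt (2 * G.trace) = Real.sqrt 2 * y := by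
      rw [Real.sqrt_mul (by norm_num : (0:ℝ) ≤ 2), hy]
    have q4 : Real.sqrt 2 * y ≤ 2 * (4 * frob E / lamK) := by
      have : Real.sqrt 2 * y ≤ 2 * y := mul_le_mul_of_nonneg_right hs2le hynn
      have h9 : y ≤ 4 * frob E / lamK := hylam
      linarith
    calc frob (Uh - U * R) ≤ Real.sqrt (2 * G.trace) := q2
      _ = Real.sqrt 2 * y := q3
      _ ≤ 2 * (4 * frob E / lamK) := q4
      _ = 8 * frob E / lamK := by ring
  have hfinV : frob (Vh - V * R) ≤ 8 * frob E / lamK := by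
    have q1 : fsq (Vh - V * R) ≤ 2 * G.trace := by
      have := fsq_nonneg (Uh - U * R); linarith
    have q2 : frob (Vh - V * R) ≤ Real.sqrt (2 * G.trace) := by
      rw [frob_eq]; exact Real.sqrt_le_sqrt q1
    have q3 : Real.sqrt (2 * G.trace) = Real.sqrt 2 * y := by
      rw [Real.sqrt_mul (by norm_num : (0:ℝ) ≤ 2), hy]
    have q4 : Real.sqrt 2 * y ≤ 2 * (4 * frob E / lamK) := by
      have : Real.sqrt 2 * y ≤ 2 * y := mul_le_mul_of_nonneg_right hs2le hynn
      have h9 : y ≤ 4 * frob E / lamK := hylam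
      linarith
    calc frob (Vh - V * R) ≤ Real.sqrt (2 * G.trace) := q2
      _ = Real.sqrt 2 * y := q3
      _ ≤ 2 * (4 * frob E / lamK) := q4
      _ = 8 * frob E / lamK := by ring
  exact max_le hfinU hfinV
end
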